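/- arXiv:2405.16231 — 9 statements merged into one kernel-verified Lean document; each statement's English description precedes it below -/
import Mathlib

section
/- Let F be a field, let 0 ≤ k < n be integers, and let V(n,k) ⊆ F^n denote the set of all 0-1 vectors in F^n with at most k coordinates equal to 1. Let f ∈ F[x_1,…,x_n] be a polynomial that vanishes at every point of V(n,k), and suppose there exists a 0-1 vector v ∈ {0,1}^n \ V(n,k) (i.e. a 0-1 vector with more than k ones) such that f(v) ≠ 0. Then deg(f) > k. -/
open MvPolynomial Finset

lemma sw_eval_char {F : Type*} [Field F] {n : ℕ} (f : MvPolynomial (Fin n) F)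
    (K : Finset (Fin n)) :
    MvPolynomial.eval (fun i => if i ∈ K then (1 : F) else 0) f
      = ∑ a ∈ f.support, if a.support ⊆ K then f.coeff a else 0 := by
  classical
  rw [MvPolynomial.eval_eq]
  apply Finset.sum_congr rfl
  intro a _
  have hprod : (∏ i ∈ a.support, (if i ∈ K then (1:F) else 0) ^ a i)
      = if a.support ⊆ K then 1 else 0 := by
    by_cases h : a.support ⊆ K
    · rw [if_pos h]
      apply Finset.prod_eq_one
      intro i hi
      simp [h hi]
    · rw [if_neg h]
      obtain ⟨i, hi, hiK⟩ := Finset.not_subset.mp h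
      apply Finset.prod_eq_zero hi
      have hne : a i ≠ 0 := Finsupp.mem_support_iff.mp hi
      simp [hiK, zero_pow hne]
  rw [hprod, mul_ite, mul_one, mul_zero]

lemma sw_alt_sum {F : Type*} [Field F] {n : ℕ} (S T : Finset (Fin n)) :
    ∑ K ∈ T.powerset.filter (fun K => S ⊆ K), (-1 : F) ^ (T.card - K.card)
      = if S = T then 1 else 0 := by
  classical
  by_cases hST : S ⊆ T
  · -- reindex J = K \ S  over powerset (T \ S)
    have hbij : ∑ K ∈ T.powerset.filter (fun K => S ⊆ K), (-1 : F) ^ (T.card - K.card)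
        = ∑ J ∈ (T \ S).powerset, (-1 : F) ^ ((T \ S).card - J.card) := by
      apply Finset.sum_nbij' (fun K => K \ S) (fun J => S ∪ J)
      · intro K hK
        simp only [Finset.mem_filter, Finset.mem_powerset] at hK
        exact Finset.mem_powerset.mpr (Finset.sdiff_subset_sdiff hK.1 le_rfl)
      · intro J hJ
        simp only [Finset.mem_powerset] at hJ
        refine Finset.mem_filter.mpr ⟨Finset.mem_powerset.mpr ?_, Finset.subset_union_left⟩
        exact Finset.union_subset hST (hJ.trans Finset.sdiff_subset)
      · intro K hK
        simp only [Finset.mem_filter, Finset.mem_powerset] at hK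
        exact Finset.union_sdiff_of_subset hK.2
      · intro J hJ
        simp only [Finset.mem_powerset] at hJ
        have : Disjoint S J := Finset.disjoint_of_subset_right hJ Finset.sdiff_disjoint.symm
        exact Finset.union_sdiff_cancel_left this
      · intro K hK
        simp only [Finset.mem_filter, Finset.mem_powerset] at hK
        congr 1
        have h1 : (K \ S).card = K.card - S.card := Finset.card_sdiff_of_subset hK.2
        have h2 : (T \ S).card = T.card - S.card := Finset.card_sdiff_of_subset hST
        have hSK := Finset.card_le_card hK.2
        have hKT := Finset.card_le_card hK.1
        omega
    rw [hbij]
    have key : ∑ J ∈ (T \ S).powerset, (-1 : F) ^ ((T \ S).card - J.card)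
        = (-1 : F) ^ (T \ S).card * ∑ J ∈ (T \ S).powerset, (-1 : F) ^ J.card := by
      rw [Finset.mul_sum]
      apply Finset.sum_congr rfl
      intro J hJ
      have hc : J.card ≤ (T \ S).card :=
        Finset.card_le_card (Finset.mem_powerset.mp hJ)
      have e1 : ((T \ S).card - J.card) + J.card = (T \ S).card := by omega
      have h1 : (-1:F) ^ J.card * (-1:F) ^ J.card = 1 := by
        rw [← pow_add, ← two_mul, pow_mul]
        norm_num
      calc (-1:F) ^ ((T \ S).card - J.card)
          = (-1:F) ^ ((T \ S).card - J.card) * ((-1:F) ^ J.card * (-1:F) ^ J.card) := by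
            rw [h1, mul_one]
        _ = ((-1:F) ^ ((T \ S).card - J.card) * (-1:F) ^ J.card) * (-1:F) ^ J.card := by
            ring
        _ = (-1:F) ^ (T \ S).card * (-1:F) ^ J.card := by rw [← pow_add, e1]
    rw [key]
    have hz : (∑ J ∈ (T \ S).powerset, (-1 : F) ^ J.card)
        = if (T \ S) = ∅ then 1 else 0 := by
      have := Finset.sum_powerset_neg_one_pow_card (x := T \ S)
      have hcast : ((∑ m ∈ (T \ S).powerset, (-1 : ℤ) ^ m.card : ℤ) : F)
          = ∑ J ∈ (T \ S).powerset, (-1 : F) ^ J.card := by push_cast; ring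
      rw [← hcast, this]
      split <;> simp
    rw [hz]
    by_cases he : T \ S = ∅
    · have hTS : S = T := Finset.Subset.antisymm hST (by
        intro x hx
        by_contra hxS
        exact (Finset.eq_empty_iff_forall_notMem.mp he x)
          (Finset.mem_sdiff.mpr ⟨hx, hxS⟩))
      simp [he, hTS]
    · have : S ≠ T := by
        intro h; exact he (by simp [h])
      simp [he, this]
  · have hempty : T.powerset.filter (fun K => S ⊆ K) = ∅ := by
      apply Finset.filter_false_of_mem
      intro K hK hSK
      exact hST (hSK.trans (Finset.mem_powerset.mp hK))
    have : S ≠ T := fun h => hST (h ▸ le_rfl)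
    simp [hempty, this]

/-- **Sziklai–Weiner theorem, generalized form.**
If `f` vanishes on all 0-1 vectors with at most `k` ones, and there is some
0-1 vector with more than `k` ones where `f` does not vanish, then
the total degree of `f` is greater than `k`. -/
theorem sziklai_weiner_generalized {F : Type*} [Field F] {n k : ℕ} (hk : k < n)
    (f : MvPolynomial (Fin n) F)
    (hvanish : ∀ K : Finset (Fin n), K.card ≤ k →
      MvPolynomial.eval (fun i => if i ∈ K then (1 : F) else 0) f = 0)
    (hv : ∃ T : Finset (Fin n), k < T.card ∧
      MvPolynomial.eval (fun i => if i ∈ T then (1 : F) else 0) f ≠ 0) :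
    k < f.totalDegree := by
  classical
  by_contra hle
  push_neg at hle
  obtain ⟨T0, hT01, hT02⟩ := hv
  obtain ⟨T, hTmem, hTmin⟩ := Finset.exists_min_image
    (Finset.univ.filter (fun T : Finset (Fin n) => k < T.card ∧
      MvPolynomial.eval (fun i => if i ∈ T then (1 : F) else 0) f ≠ 0))
    Finset.card ⟨T0, by simp [hT01, hT02]⟩
  simp only [Finset.mem_filter, Finset.mem_univ, true_and] at hTmem
  obtain ⟨hTk, hTne⟩ := hTmem
  set S : F := ∑ K ∈ T.powerset, (-1 : F) ^ (T.card - K.card)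
      * MvPolynomial.eval (fun i => if i ∈ K then (1 : F) else 0) f with hS
  -- S = eval χ_T f
  have hB : S = MvPolynomial.eval (fun i => if i ∈ T then (1 : F) else 0) f := by
    rw [hS]
    rw [Finset.sum_eq_single T]
    · simp
    · intro K hK hKne
      have hKT : K ⊆ T := Finset.mem_powerset.mp hK
      have hcard : K.card < T.card := Finset.card_lt_card (hKT.ssubset_of_ne hKne)
      have hev : MvPolynomial.eval (fun i => if i ∈ K then (1 : F) else 0) f = 0 := by
        by_cases hck : K.card ≤ k
        · exact hvanish K hck
        · by_contra hne
          have := hTmin K (by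
            simp only [Finset.mem_filter, Finset.mem_univ, true_and]
            exact ⟨lt_of_not_ge hck, hne⟩)
          omega
      rw [hev, mul_zero]
    · intro h
      exact absurd (Finset.mem_powerset.mpr le_rfl) h
  -- S = 0
  have hA : S = 0 := by
    rw [hS]
    have : ∀ K ∈ T.powerset, (-1 : F) ^ (T.card - K.card)
        * MvPolynomial.eval (fun i => if i ∈ K then (1 : F) else 0) f
        = ∑ a ∈ f.support, if a.support ⊆ K then
            (-1 : F) ^ (T.card - K.card) * f.coeff a else 0 := by
      intro K _
      rw [sw_eval_char, Finset.mul_sum]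
      apply Finset.sum_congr rfl
      intro a _
      rw [mul_ite, mul_zero]
    rw [Finset.sum_congr rfl this, Finset.sum_comm]
    apply Finset.sum_eq_zero
    intro a ha
    have inner : ∑ K ∈ T.powerset, (if a.support ⊆ K then
        (-1 : F) ^ (T.card - K.card) * f.coeff a else 0)
        = (∑ K ∈ T.powerset.filter (fun K => a.support ⊆ K),
            (-1 : F) ^ (T.card - K.card)) * f.coeff a := by
      rw [Finset.sum_filter, Finset.sum_mul]
      apply Finset.sum_congr rfl
      intro K _
      split <;> simp
    rw [inner, sw_alt_sum]
    by_cases hsa : a.support = T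
    · exfalso
      have h1 : (a.sum fun _ e => e) ≤ f.totalDegree := MvPolynomial.le_totalDegree ha
      have h2 : a.support.card ≤ a.sum fun _ e => e := by
        rw [Finsupp.sum]
        calc a.support.card = ∑ _i ∈ a.support, 1 := by simp
        _ ≤ ∑ i ∈ a.support, a i := by
            apply Finset.sum_le_sum
            intro i hi
            exact Nat.one_le_iff_ne_zero.mpr (Finsupp.mem_support_iff.mp hi)
      rw [hsa] at h2
      omega
    · simp [hsa]
  exact hTne (hB ▸ hA)
end

section
/- Let F be a field, let 0 ≤ k < n be integers, and let V(n,k) ⊆ F^n denote the set of all 0-1 vectors in F^n with at most k coordinates equal to 1. Let f ∈ F[x_1,…,x_n] be a polynomial that vanishes at every point of V(n,k) and satisfies f(v) ≠ 0 for every 0-1 vector v ∈ {0,1}^n \ V(n,k). Then deg(f) > k. -/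
open Finset MvPolynomial

private lemma sw_prod {F : Type*} [Field F] {n : ℕ} (d : Fin n →₀ ℕ) (K : Finset (Fin n)) :
    (∏ i ∈ d.support, (if i ∈ K then (1:F) else 0) ^ d i) = if d.support ⊆ K then 1 else 0 := by
  by_cases h : d.support ⊆ K
  · rw [if_pos h]
    apply Finset.prod_eq_one
    intro i hi
    have : i ∈ K := h hi
    simp [this]
  · rw [if_neg h]
    obtain ⟨i, hi, hiK⟩ := Finset.not_subset.1 h
    apply Finset.prod_eq_zero hi
    have hd : d i ≠ 0 := Finsupp.mem_support_iff.1 hi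
    simp [hiK, zero_pow hd]

private lemma sw_sum {F : Type*} [Field F] {α : Type*} [DecidableEq α] (S T : Finset α)
    (hne : S ≠ T) :
    ∑ K ∈ T.powerset, (-1:F)^K.card * (if S ⊆ K then 1 else 0) = 0 := by
  by_cases hST : S ⊆ T
  · rw [← Finset.sum_filter_add_sum_filter_not T.powerset (fun K => S ⊆ K)]
    have h2 : ∑ K ∈ T.powerset.filter (fun K => ¬ S ⊆ K),
        (-1:F)^K.card * (if S ⊆ K then 1 else 0) = 0 :=
      Finset.sum_eq_zero fun K hK => by simp [(Finset.mem_filter.1 hK).2]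
    rw [h2, add_zero]
    have hb : ∑ K ∈ T.powerset.filter (fun K => S ⊆ K),
        (-1:F)^K.card * (if S ⊆ K then 1 else 0)
        = ∑ K ∈ (T \ S).powerset, (-1:F)^(K ∪ S).card * 1 := by
      apply Finset.sum_nbij' (i := fun K => K \ S) (j := fun K => K ∪ S)
      · intro K hK
        obtain ⟨hKT, hSK⟩ := Finset.mem_filter.1 hK
        rw [Finset.mem_powerset] at hKT ⊢
        exact Finset.sdiff_subset_sdiff hKT le_rfl
      · intro K hK
        rw [Finset.mem_powerset] at hK
        rw [Finset.mem_filter, Finset.mem_powerset]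
        exact ⟨Finset.union_subset (hK.trans Finset.sdiff_subset) hST, Finset.subset_union_right⟩
      · intro K hK
        obtain ⟨hKT, hSK⟩ := Finset.mem_filter.1 hK
        exact Finset.sdiff_union_of_subset hSK
      · intro K hK
        rw [Finset.mem_powerset] at hK
        have : Disjoint K S := Finset.disjoint_of_subset_left hK Finset.sdiff_disjoint
        rw [Finset.union_sdiff_cancel_right this]
      · intro K hK
        obtain ⟨hKT, hSK⟩ := Finset.mem_filter.1 hK
        rw [Finset.sdiff_union_of_subset hSK, if_pos hSK]
    rw [hb]
    have hTS : T \ S ≠ ∅ := by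
      rw [Ne, Finset.sdiff_eq_empty_iff_subset]
      exact fun h => hne (Finset.Subset.antisymm hST h)
    have hzero : ∑ K ∈ (T \ S).powerset, (-1:F)^K.card = 0 := by
      have hz := Finset.sum_powerset_neg_one_pow_card (x := T \ S)
      rw [if_neg hTS] at hz
      calc ∑ K ∈ (T \ S).powerset, (-1:F)^K.card
          = ((∑ K ∈ (T \ S).powerset, (-1:ℤ)^K.card : ℤ) : F) := by push_cast; rfl
        _ = 0 := by rw [hz]; simp
    calc ∑ K ∈ (T \ S).powerset, (-1:F)^(K ∪ S).card * 1
        = ∑ K ∈ (T \ S).powerset, (-1:F)^S.card * (-1:F)^K.card := by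
          refine Finset.sum_congr rfl fun K hK => ?_
          rw [Finset.mem_powerset] at hK
          rw [Finset.card_union_of_disjoint
            (Finset.disjoint_of_subset_left hK Finset.sdiff_disjoint), mul_one, pow_add, mul_comm]
      _ = (-1:F)^S.card * ∑ K ∈ (T \ S).powerset, (-1:F)^K.card := by
          rw [Finset.mul_sum]
      _ = 0 := by rw [hzero, mul_zero]
  · apply Finset.sum_eq_zero
    intro K hK
    rw [Finset.mem_powerset] at hK
    have : ¬ S ⊆ K := fun h => hST (h.trans hK)
    simp [this]

/-- **Sziklai–Weiner theorem.**
If `f` vanishes on all 0-1 vectors with at most `k` ones, and `f` does not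
vanish at any 0-1 vector with more than `k` ones, then the total degree of
`f` is greater than `k`. -/
theorem sziklai_weiner {F : Type*} [Field F] {n k : ℕ} (hk : k < n)
    (f : MvPolynomial (Fin n) F)
    (hvanish : ∀ K : Finset (Fin n), K.card ≤ k →
      MvPolynomial.eval (fun i => if i ∈ K then (1 : F) else 0) f = 0)
    (hnonzero : ∀ T : Finset (Fin n), k < T.card →
      MvPolynomial.eval (fun i => if i ∈ T then (1 : F) else 0) f ≠ 0) :
    k < f.totalDegree := by
  by_contra hdeg
  push_neg at hdeg
  obtain ⟨T, -, hTcard⟩ := Finset.exists_subset_card_eq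
    (show k + 1 ≤ (Finset.univ : Finset (Fin n)).card by simpa using hk)
  have hsum : ∑ K ∈ T.powerset,
      (-1:F)^K.card * MvPolynomial.eval (fun i => if i ∈ K then (1:F) else 0) f = 0 := by
    have heval : ∀ K : Finset (Fin n),
        MvPolynomial.eval (fun i => if i ∈ K then (1:F) else 0) f
        = ∑ d ∈ f.support, MvPolynomial.coeff d f * (if d.support ⊆ K then 1 else 0) := by
      intro K
      rw [MvPolynomial.eval_eq]
      exact Finset.sum_congr rfl fun d _ => by rw [sw_prod]
    calc ∑ K ∈ T.powerset, (-1:F)^K.card *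
          MvPolynomial.eval (fun i => if i ∈ K then (1:F) else 0) f
        = ∑ d ∈ f.support, MvPolynomial.coeff d f *
          ∑ K ∈ T.powerset, (-1:F)^K.card * (if d.support ⊆ K then 1 else 0) := by
          simp_rw [heval, Finset.mul_sum]
          rw [Finset.sum_comm]
          refine Finset.sum_congr rfl fun d _ => Finset.sum_congr rfl fun K _ => by ring
      _ = 0 := by
          apply Finset.sum_eq_zero
          intro d hd
          rw [sw_sum, mul_zero]
          intro hEq
          have h1 : d.support.card ≤ f.totalDegree := by
            have hle := MvPolynomial.le_totalDegree hd
            calc d.support.card ≤ d.sum fun _ e => e := by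
                  rw [Finsupp.sum]
                  calc d.support.card = ∑ _i ∈ d.support, 1 := by simp
                    _ ≤ ∑ i ∈ d.support, d i := Finset.sum_le_sum fun i hi =>
                        Nat.one_le_iff_ne_zero.2 (Finsupp.mem_support_iff.1 hi)
              _ ≤ f.totalDegree := hle
          rw [hEq, hTcard] at h1
          omega
  have hT : ∀ K ∈ T.powerset, K ≠ T →
      (-1:F)^K.card * MvPolynomial.eval (fun i => if i ∈ K then (1:F) else 0) f = 0 := by
    intro K hK hKT
    rw [Finset.mem_powerset] at hK
    have : K.card ≤ k := by
      have := Finset.card_lt_card (lt_of_le_of_ne hK hKT)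
      omega
    rw [hvanish K this, mul_zero]
  rw [Finset.sum_eq_single T hT (by simp)] at hsum
  have := hnonzero T (by omega)
  rcases mul_eq_zero.1 hsum with h | h
  · exact absurd h (pow_ne_zero _ (neg_ne_zero.2 one_ne_zero))
  · exact this h
end

section
/- Let F be a field, n ≥ 1, and let V ⊆ F^n be a finite set of points. Let k ≥ 0 be a non-negative integer such that the binomial coefficient C(n+k, n) < |V|. Then there exists a point v ∈ V such that every almost cover of V and v consists of more than k affine hyperplanes; that is, whenever affine hyperplanes H_1, …, H_m satisfy V \ {v} ⊆ H_1 ∪ ⋯ ∪ H_m and v ∉ H_1 ∪ ⋯ ∪ H_m, it follows that m > k. -/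
open Finset

def Dset (n k : ℕ) : Finset (Fin n → ℕ) :=
  (Fintype.piFinset fun _ => Finset.range (k+1)).filter (fun d => ∑ i, d i ≤ k)

lemma mem_Dset {n k : ℕ} {d : Fin n → ℕ} : d ∈ Dset n k ↔ ∑ i, d i ≤ k := by
  simp only [Dset, Finset.mem_filter, Fintype.mem_piFinset, Finset.mem_range]
  constructor
  · exact fun h => h.2
  · intro h
    refine ⟨fun i => Nat.lt_succ_of_le (le_trans ?_ h), h⟩
    exact Finset.single_le_sum (f := fun i => d i) (fun _ _ => Nat.zero_le _) (Finset.mem_univ i)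

lemma card_Dset (n : ℕ) : ∀ k, (Dset n k).card = (n + k).choose n := by
  induction n with
  | zero =>
    intro k
    rw [Nat.choose_zero_right, Finset.card_eq_one]
    refine ⟨fun i => i.elim0, ?_⟩
    ext d
    simp [mem_Dset, funext_iff]
  | succ n ih =>
    intro k
    have hfib : (Dset (n+1) k).card = ∑ j ∈ Finset.range (k+1), (Dset n (k-j)).card := by
      rw [Finset.card_eq_sum_card_fiberwise (f := fun d => d 0) (t := Finset.range (k+1))]
      · refine Finset.sum_congr rfl fun j hj => ?_
        rw [Finset.mem_range, Nat.lt_succ_iff] at hj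
        apply Finset.card_bij (fun d _ => Fin.tail d)
        · rintro d hd
          rw [Finset.mem_filter] at hd
          obtain ⟨hd, hd0⟩ := hd
          rw [mem_Dset] at hd ⊢
          rw [Fin.sum_univ_succ] at hd
          simp only [Fin.tail]
          omega
        · intro d1 h1 d2 h2 htail
          rw [Finset.mem_filter] at h1 h2
          have := h1.2.trans h2.2.symm
          funext i
          refine Fin.cases ?_ ?_ i
          · exact this
          · exact fun i => congrFun htail i
        · intro e he
          rw [mem_Dset] at he
          refine ⟨Fin.cons j e, ?_, ?_⟩
          · rw [Finset.mem_filter, mem_Dset]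
            constructor
            · rw [Fin.sum_univ_succ]
              simp only [Fin.cons_zero, Fin.cons_succ]
              omega
            · simp
          · simp [Fin.tail]
      · intro d hd
        rw [Finset.mem_coe, mem_Dset] at hd
        rw [Finset.mem_coe, Finset.mem_range, Nat.lt_succ_iff]
        calc d 0 ≤ ∑ i, d i :=
          Finset.single_le_sum (f := fun i => d i) (fun _ _ => Nat.zero_le _) (Finset.mem_univ 0)
        _ ≤ k := hd
    rw [hfib]
    have : ∀ j ∈ Finset.range (k+1), (Dset n (k-j)).card = (n + (k-j)).choose n :=
      fun j _ => ih _
    have hrefl := Finset.sum_range_reflect (fun x => (n + x).choose n) (k+1)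
    simp only [Nat.succ_sub_one] at hrefl
    rw [Finset.sum_congr rfl this, hrefl]
    have h3 : ∑ m ∈ Finset.Icc n (n + k), m.choose n
        = ∑ j ∈ Finset.range (k+1), (n + j).choose n := by
      rw [← Finset.Ico_add_one_right_eq_Icc, Finset.sum_Ico_eq_sum_range]
      have hh : n + k + 1 - n = k + 1 := by omega
      rw [hh]
    rw [← h3, Nat.sum_Icc_choose]
    congr 1
    omega

/-- An affine hyperplane in `F^n`: the solution set `{x | ∑ i, a i * x i = c}`
of a degree-one equation, where the linear functional `a` is nonzero. -/
def IsAffineHyperplane {F : Type*} [Field F] {n : ℕ} (H : Set (Fin n → F)) : Prop :=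
  ∃ (a : Fin n → F) (c : F), a ≠ 0 ∧ H = {x : Fin n → F | ∑ i, a i * x i = c}

/-- **Lower bound for almost covers.** If `C(n+k, n) < |V|`, then there is a
point `v ∈ V` such that every almost cover of `V` and `v` consists of more
than `k` affine hyperplanes. -/
theorem almost_cover_lower_bound {F : Type*} [Field F] {n : ℕ} (hn : 1 ≤ n)
    (V : Finset (Fin n → F)) (k : ℕ) (hk : (n + k).choose n < V.card) :
    ∃ v ∈ V, ∀ (m : ℕ) (H : Fin m → Set (Fin n → F)),
      (∀ j, IsAffineHyperplane (H j)) →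
      (↑V \ {v} : Set (Fin n → F)) ⊆ ⋃ j, H j →
      v ∉ ⋃ j, H j → k < m := by
  classical
  by_contra hcon
  push_neg at hcon
  choose m Hf hH hcov hnot hm using fun (v : ↥V) => hcon v v.2
  choose a c ha hEq using fun v j => hH v j
  -- the product-of-affine-forms function for each v
  set f : ↥V → ((Fin n → F) → F) :=
    fun v x => ∏ j, (∑ i, a v j i * x i - c v j) with hf
  -- corresponding polynomial
  set P : ↥V → MvPolynomial (Fin n) F :=
    fun v => ∏ j, ((∑ i, MvPolynomial.C (a v j i) * MvPolynomial.X i) -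
      MvPolynomial.C (c v j)) with hP
  have hfeval : ∀ v x, f v x = MvPolynomial.eval x (P v) := by
    intro v x
    simp only [hf, hP, map_prod, map_sub, map_sum, map_mul, MvPolynomial.eval_C,
      MvPolynomial.eval_X]
  -- f v is nonzero at v
  have hfv : ∀ v : ↥V, f v v ≠ 0 := by
    intro v
    apply Finset.prod_ne_zero_iff.mpr
    intro j _
    intro h0
    apply hnot v
    refine Set.mem_iUnion.mpr ⟨j, ?_⟩
    rw [hEq v j]
    simpa [sub_eq_zero] using h0
  -- f v vanishes at other points of V
  have hfw : ∀ v w : ↥V, w ≠ v → f v w = 0 := by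
    intro v w hwv
    have hwmem : (w : Fin n → F) ∈ (↑V \ {(v : Fin n → F)} : Set (Fin n → F)) := by
      refine ⟨w.2, ?_⟩
      simp only [Set.mem_singleton_iff]
      exact fun h => hwv (Subtype.ext h)
    obtain ⟨j, hj⟩ := Set.mem_iUnion.mp (hcov v hwmem)
    rw [hEq v j] at hj
    apply Finset.prod_eq_zero (Finset.mem_univ j)
    rw [sub_eq_zero]
    exact hj
  -- linear independence
  have hli : LinearIndependent F f := by
    rw [Fintype.linearIndependent_iff]
    intro g hg w
    have h1 := congrFun hg (w : Fin n → F)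
    rw [Finset.sum_apply] at h1
    simp only [Pi.smul_apply, smul_eq_mul, Pi.zero_apply] at h1
    rw [Finset.sum_eq_single w (fun v _ hv => by rw [hfw v w hv.symm, mul_zero])
      (fun h => absurd (Finset.mem_univ w) h)] at h1
    exact (mul_eq_zero.mp h1).resolve_right (hfv w)
  -- total degree bound
  have hdeg : ∀ v, (P v).totalDegree ≤ k := by
    intro v
    calc (P v).totalDegree ≤ ∑ _j : Fin (m v), 1 := by
          apply (MvPolynomial.totalDegree_finset_prod _ _).trans
          apply Finset.sum_le_sum
          intro j _
          apply (MvPolynomial.totalDegree_sub _ _).trans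
          apply max_le
          · apply (MvPolynomial.totalDegree_finset_sum _ _).trans
            apply Finset.sup_le
            intro i _
            apply (MvPolynomial.totalDegree_mul _ _).trans
            simp [MvPolynomial.totalDegree_C, MvPolynomial.totalDegree_X]
          · simp [MvPolynomial.totalDegree_C]
      _ = m v := by simp
      _ ≤ k := hm v
  -- the monomial functions
  set mon : (Fin n → ℕ) → ((Fin n → F) → F) := fun d x => ∏ i, x i ^ d i with hmon
  set W : Finset ((Fin n → F) → F) := (Dset n k).image mon with hW
  -- each f v is in the span of W
  have hspan : ∀ v, f v ∈ Submodule.span F (W : Set ((Fin n → F) → F)) := by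
    intro v
    have : f v = ∑ d ∈ (P v).support, MvPolynomial.coeff d (P v) • mon (⇑d) := by
      funext x
      rw [hfeval v x, MvPolynomial.eval_eq']
      rw [Finset.sum_apply]
      simp [hmon]
    rw [this]
    apply Submodule.sum_mem
    intro d hd
    apply Submodule.smul_mem
    apply Submodule.subset_span
    rw [hW]
    simp only [Finset.coe_image, Set.mem_image, Finset.mem_coe]
    refine ⟨⇑d, ?_, rfl⟩
    rw [mem_Dset]
    have hds : ∑ i, d i ≤ (P v).totalDegree := by
      have := MvPolynomial.le_totalDegree hd
      rwa [Finsupp.sum_fintype _ _ (fun _ => rfl)] at this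
    exact hds.trans (hdeg v)
  -- conclude
  have hcard : (Cardinal.mk ↥V) ≤ Fintype.card (W : Set ((Fin n → F) → F)) := by
    apply linearIndependent_le_span' f hli
    rintro _ ⟨v, rfl⟩
    exact hspan v
  have : V.card ≤ W.card := by
    rw [Cardinal.mk_coe_finset] at hcard
    simp only [Finset.coe_sort_coe, Fintype.card_coe] at hcard
    exact_mod_cast hcard
  have hWD : W.card ≤ (Dset n k).card := Finset.card_image_le
  rw [card_Dset] at hWD
  omega
end

section
/- Let F be a field, n ≥ 1, and let V ⊆ F^n be a finite set of points. Let k ≥ 0 be a non-negative integer such that the binomial coefficient C(n+k, n) < |V|. Then there exists a point u ∈ V such that every polynomial f ∈ F[x_1,…,x_n] which vanishes at every point of V \ {u} but satisfies f(u) ≠ 0 has total degree deg(f) > k. -/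
open MvPolynomial

set_option maxHeartbeats 800000 in
/-- Counting lemma: monomials in `n` variables of total degree at most `k` number
at most `C(n+k, n)`. -/
lemma card_degree_le_monomials (n k : ℕ) :
    Nat.card {d : Fin n →₀ ℕ // (d.sum fun _ e => e) ≤ k} ≤ (n + k).choose n := by
  classical
  have e1 : {d : Fin n →₀ ℕ // (d.sum fun _ e => e) ≤ k} ≃ {f : Fin n → ℕ // ∑ i, f i ≤ k} :=
    Finsupp.equivFunOnFinite.subtypeEquiv fun d => by
      rw [Finsupp.sum_fintype _ _ (fun _ => rfl)]; rfl
  have hfin : Finite {g : Fin (n+1) → ℕ // ∑ i, g i = k} := by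
    apply Finite.of_injective (fun g : {g : Fin (n+1) → ℕ // ∑ i, g i = k} =>
      (fun i => (⟨g.1 i, Nat.lt_succ_of_le (by
        calc g.1 i ≤ ∑ j, g.1 j :=
              Finset.single_le_sum (fun _ _ => Nat.zero_le _) (Finset.mem_univ i)
          _ = k := g.2)⟩ : Fin (k+1)) : Fin (n+1) → Fin (k+1)))
    intro a b h
    ext i
    exact congrArg Fin.val (congrFun h i)
  have inj : Function.Injective
      (fun f : {f : Fin n → ℕ // ∑ i, f i ≤ k} =>
        (⟨Fin.cons (k - ∑ i, f.1 i) f.1, by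
          rw [Fin.sum_cons, Nat.sub_add_cancel f.2]⟩ : {g : Fin (n+1) → ℕ // ∑ i, g i = k})) := by
    intro a b h
    have := congrArg (fun g => Fin.tail g.1) h
    simpa [Fin.tail_cons] using Subtype.ext this
  calc Nat.card {d : Fin n →₀ ℕ // (d.sum fun _ e => e) ≤ k}
      = Nat.card {f : Fin n → ℕ // ∑ i, f i ≤ k} := Nat.card_congr e1
    _ ≤ Nat.card {g : Fin (n+1) → ℕ // ∑ i, g i = k} := Nat.card_le_card_of_injective _ inj
    _ = Nat.card (Sym (Fin (n+1)) k) :=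
        (Nat.card_congr (Sym.equivNatSumOfFintype (Fin (n+1)) k)).symm
    _ = Fintype.card (Sym (Fin (n+1)) k) := Nat.card_eq_fintype_card
    _ = (Fintype.card (Fin (n+1)) + k - 1).choose k := Sym.card_sym_eq_choose k
    _ = (n + k).choose k := by congr 1; simp
    _ = (n + k).choose n := by
        rw [← Nat.choose_symm (Nat.le_add_right n k)]; congr 1; omega

set_option maxHeartbeats 800000 in
/-- **Polynomial form of the almost-cover lower bound.** If `C(n+k, n) < |V|`,
then there is a point `u ∈ V` such that every polynomial vanishing on
`V \ {u}` but not at `u` has total degree greater than `k`. -/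
theorem almost_cover_lower_bound_poly {F : Type*} [Field F] {n : ℕ} (hn : 1 ≤ n)
    (V : Finset (Fin n → F)) (k : ℕ) (hk : (n + k).choose n < V.card) :
    ∃ u ∈ V, ∀ f : MvPolynomial (Fin n) F,
      (∀ w ∈ V, w ≠ u → MvPolynomial.eval w f = 0) →
      MvPolynomial.eval u f ≠ 0 → k < f.totalDegree := by
  classical
  by_contra hcon
  push_neg at hcon
  -- choose for each u a polynomial of degree ≤ k separating u from V \ {u}
  choose f hf1 hf2 hf3 using hcon
  -- package into the submodule of polynomials of degree ≤ k
  set W := restrictTotalDegree (Fin n) F k with hW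
  haveI : Module.Finite F W :=
    inferInstanceAs (Module.Finite F (restrictTotalDegree (Fin n) F k))
  have hfW : ∀ u (hu : u ∈ V), f u hu ∈ W := fun u hu =>
    (mem_restrictTotalDegree _ _ _).mpr (hf3 u hu)
  let g : V → W := fun u => ⟨f u u.2, hfW u u.2⟩
  have hli : LinearIndependent F g := by
    rw [Fintype.linearIndependent_iff]
    intro c hc u
    have := congrArg (fun p : W => MvPolynomial.eval (u : Fin n → F) (p : MvPolynomial (Fin n) F)) hc
    simp only [Submodule.coe_sum, Submodule.coe_smul, map_sum, map_zero] at this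
    rw [Finset.sum_eq_single u] at this
    · simp only [smul_eq_C_mul, map_mul, eval_C, g] at this
      exact (mul_eq_zero.mp this).resolve_right (hf2 u u.2)
    · intro w _ hw
      have hvz : MvPolynomial.eval (u : Fin n → F) (f (w : Fin n → F) w.2) = 0 :=
        hf1 (w : Fin n → F) w.2 (u : Fin n → F) u.2 (fun h => hw (Subtype.ext h.symm))
      simp [g, smul_eq_C_mul, hvz]
    · intro h
      exact absurd (Finset.mem_univ u) h
  -- linear independence bounds the cardinality by the finrank of W
  have hcard : Fintype.card V ≤ Module.finrank F W :=
    hli.fintype_card_le_finrank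
  -- compute/bound the finrank of W by counting monomials
  have hfin : Finite {d : Fin n →₀ ℕ | (d.sum fun _ e => e) ≤ k} := by
    have := Nat.card_congr (Finsupp.equivFunOnFinite.subtypeEquiv
      (fun d : Fin n →₀ ℕ => Iff.rfl) :
      {d : Fin n →₀ ℕ // True} ≃ {f : Fin n → ℕ // True})
    -- direct finiteness proof
    apply Finite.of_injective (fun d : {d : Fin n →₀ ℕ | (d.sum fun _ e => e) ≤ k} =>
      (fun i => (⟨d.1 i, Nat.lt_succ_of_le (by
        rcases Nat.eq_zero_or_pos (d.1 i) with h | h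
        · omega
        · calc d.1 i ≤ d.1.sum fun _ e => e :=
                Finset.single_le_sum (fun _ _ => Nat.zero_le _)
                  (Finsupp.mem_support_iff.mpr (by omega))
            _ ≤ k := d.2)⟩ : Fin (k+1)) : Fin n → Fin (k+1)))
    intro a b h
    apply Subtype.ext
    ext i
    exact congrArg Fin.val (congrFun h i)
  haveI : Fintype {d : Fin n →₀ ℕ | (d.sum fun _ e => e) ≤ k} := Fintype.ofFinite _
  have hrank : Module.finrank F W
      = Fintype.card {d : Fin n →₀ ℕ | (d.sum fun _ e => e) ≤ k} :=
    Module.finrank_eq_card_basis (basisRestrictSupport F _)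
  have hbound : Module.finrank F W ≤ (n + k).choose n := by
    rw [hrank, ← Nat.card_eq_fintype_card]
    exact card_degree_le_monomials n k
  have : V.card ≤ (n + k).choose n := by
    rw [← Fintype.card_coe]
    exact hcard.trans hbound
  omega
end

section
/- Let F be a field, n ≥ 1, and let V ⊆ F^n be a finite set of points with |V| ≥ 4^n. Then there exists a point v ∈ V such that every almost cover of V and v consists of more than n affine hyperplanes. -/
section Aux

open Finset

variable {F : Type*} [Field F] {n : ℕ} (V : Finset (Fin n → F))

/-- The monomial function with exponent vector `d`, restricted to `V`. -/
def monV (d : Fin n → ℕ) : ↥V → F := fun u => ∏ i, (u : Fin n → F) i ^ d i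

/-- The span of monomial functions of total degree at most `k`. -/
def TT (k : ℕ) : Submodule F (↥V → F) :=
  Submodule.span F {g : ↥V → F | ∃ d : Fin n → ℕ, ∑ i, d i ≤ k ∧ g = monV V d}

lemma TT_mono {k k' : ℕ} (h : k ≤ k') : TT V k ≤ TT V k' :=
  Submodule.span_mono (fun g hg => by
    obtain ⟨d, hd, hgd⟩ := hg; exact ⟨d, hd.trans h, hgd⟩)

lemma monV_add_single (d : Fin n → ℕ) (i : Fin n) :
    monV V (d + Pi.single i 1) = fun u : ↥V => (u : Fin n → F) i * monV V d u := by
  funext u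
  unfold monV
  simp only [Pi.add_apply, pow_add]
  rw [Finset.prod_mul_distrib, mul_comm]
  congr 1
  rw [Finset.prod_eq_single i]
  · simp
  · intro b _ hb; simp [Pi.single_eq_of_ne hb]
  · simp

lemma mul_aff_mem (a0 : Fin n → F) (c0 : F) {k : ℕ} {d : Fin n → ℕ} (hd : ∑ i, d i ≤ k) :
    (fun u : ↥V => (∑ i, a0 i * (u : Fin n → F) i - c0) * monV V d u) ∈ TT V (k + 1) := by
  have key : (fun u : ↥V => (∑ i, a0 i * (u : Fin n → F) i - c0) * monV V d u)
      = (∑ i : Fin n, a0 i • monV V (d + Pi.single i 1)) - c0 • monV V d := by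
    funext u
    simp only [Pi.sub_apply, Finset.sum_apply, Pi.smul_apply, smul_eq_mul, monV_add_single]
    rw [sub_mul, Finset.sum_mul]
    congr 1
    exact Finset.sum_congr rfl fun i _ => by ring
  rw [key]
  have hsum1 : ∀ i : Fin n, ∑ j : Fin n, (d + Pi.single i 1 : Fin n → ℕ) j ≤ k + 1 := by
    intro i
    have h0 : ∑ j : Fin n, (d + Pi.single i 1 : Fin n → ℕ) j = (∑ j : Fin n, d j) + ∑ j : Fin n, Pi.single i (1 : ℕ) j := by
      simp only [Pi.add_apply]; exact Finset.sum_add_distrib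
    rw [h0, Finset.sum_pi_single']
    simp only [Finset.mem_univ, if_true]
    omega
  refine sub_mem (Submodule.sum_mem _ fun i _ => Submodule.smul_mem _ _
      (Submodule.subset_span ?_))
    (Submodule.smul_mem _ _ (Submodule.subset_span ⟨d, hd.trans (Nat.le_succ k), rfl⟩))
  exact ⟨d + Pi.single i 1, hsum1 i, rfl⟩

lemma prod_aff_mem (m : ℕ) (a : Fin m → Fin n → F) (c : Fin m → F) :
    (fun u : ↥V => ∏ j, (∑ i, a j i * (u : Fin n → F) i - c j)) ∈ TT V m := by
  induction m with
  | zero =>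
    have h0 : (fun u : ↥V => ∏ j : Fin 0, (∑ i, a j i * (u : Fin n → F) i - c j))
        = monV V 0 := by
      funext u; simp [monV]
    rw [h0]
    exact Submodule.subset_span ⟨0, by simp, rfl⟩
  | succ m IH =>
    have hprod : (fun u : ↥V => ∏ j : Fin (m + 1), (∑ i, a j i * (u : Fin n → F) i - c j))
        = (LinearMap.mulLeft F (fun u : ↥V => ∑ i, a 0 i * (u : Fin n → F) i - c 0))
            (fun u : ↥V => ∏ j : Fin m, (∑ i, a j.succ i * (u : Fin n → F) i - c j.succ)) := by
      funext u
      simp only [LinearMap.mulLeft_apply, Pi.mul_apply]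
      rw [Fin.prod_univ_succ]
    rw [hprod]
    have h1 := IH (fun j => a j.succ) (fun j => c j.succ)
    have h2 : Submodule.map
        (LinearMap.mulLeft F (fun u : ↥V => ∑ i, a 0 i * (u : Fin n → F) i - c 0))
        (TT V m) ≤ TT V (m + 1) := by
      rw [TT, Submodule.map_span, Submodule.span_le]
      rintro g ⟨g', ⟨d, hd, rfl⟩, rfl⟩
      exact mul_aff_mem V (a 0) (c 0) hd
    exact h2 (Submodule.mem_map_of_mem h1)

/-- Stars and bars bound: exponent vectors of total degree at most `n` number
fewer than `4 ^ n`. -/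
lemma card_expvec_lt (n : ℕ) (hn : 1 ≤ n) :
    ((Fintype.piFinset fun _ : Fin n => Finset.range (n + 1)).filter
      (fun d => ∑ i, d i ≤ n)).card < 4 ^ n := by
  classical
  set D := (Fintype.piFinset fun _ : Fin n => Finset.range (n + 1)).filter
      (fun d => ∑ i, d i ≤ n) with hD
  -- extension of d to ℕ
  let ext : (Fin n → ℕ) → ℕ → ℕ := fun d j => if h : j < n then d ⟨j, h⟩ else 0
  let g : (Fin n → ℕ) → Fin n → ℕ := fun d i => (i : ℕ) + ∑ j ∈ Finset.range (i + 1), ext d j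
  let f : (Fin n → ℕ) → Finset ℕ := fun d => Finset.image (g d) Finset.univ
  have hsum_univ : ∀ d : Fin n → ℕ, ∑ j ∈ Finset.range n, ext d j = ∑ i, d i := by
    intro d
    rw [Finset.sum_range fun j => ext d j]
    exact Finset.sum_congr rfl fun i _ => by simp [ext, i.isLt]
  have hgmono : ∀ d : Fin n → ℕ, StrictMono (g d) := by
    intro d i i' hii
    have : ∑ j ∈ Finset.range ((i : ℕ) + 1), ext d j
        ≤ ∑ j ∈ Finset.range ((i' : ℕ) + 1), ext d j :=
      Finset.sum_le_sum_of_subset (Finset.range_subset_range.mpr (by omega))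
    have hv : (i : ℕ) < (i' : ℕ) := hii
    simp only [g]
    omega
  have hcard : ∀ d : Fin n → ℕ, (f d).card = n := by
    intro d
    rw [Finset.card_image_of_injective _ (hgmono d).injective, Finset.card_univ,
      Fintype.card_fin]
  have hmaps : ∀ d ∈ D, f d ∈ Finset.powersetCard n (Finset.range (2 * n)) := by
    intro d hd
    rw [hD, Finset.mem_filter] at hd
    rw [Finset.mem_powersetCard]
    refine ⟨fun x hx => ?_, hcard d⟩
    simp only [f, Finset.mem_image] at hx
    obtain ⟨i, _, rfl⟩ := hx
    have h1 : ∑ j ∈ Finset.range ((i : ℕ) + 1), ext d j ≤ ∑ j ∈ Finset.range n, ext d j :=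
      Finset.sum_le_sum_of_subset (Finset.range_subset_range.mpr i.isLt)
    rw [hsum_univ d] at h1
    have h2 : (i : ℕ) < n := i.isLt
    have h3 : ∑ i, d i ≤ n := hd.2
    rw [Finset.mem_range]
    simp only [g]
    omega
  have hinj : Set.InjOn f ↑D := by
    intro d hd e he hfe
    have hge : g d = g e := by
      have h1 : g d = (f d).orderEmbOfFin (hcard d) :=
        Finset.orderEmbOfFin_unique (hcard d)
          (fun x => Finset.mem_image_of_mem _ (Finset.mem_univ x)) (hgmono d)
      have h2 : g e = (f d).orderEmbOfFin (hcard d) := by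
        apply Finset.orderEmbOfFin_unique (hcard d) _ (hgmono e)
        intro x
        rw [hfe]
        exact Finset.mem_image_of_mem _ (Finset.mem_univ x)
      rw [h1, h2]
    have hpsum : ∀ k, k < n → ∑ j ∈ Finset.range (k + 1), ext d j
        = ∑ j ∈ Finset.range (k + 1), ext e j := by
      intro k hk
      have h0 := congrFun hge ⟨k, hk⟩
      simp only [g, Fin.val_mk] at h0
      omega
    funext i
    rcases i with ⟨iv, hiv⟩
    have hde : ext d iv = ext e iv := by
      cases iv with
      | zero =>
        have h0 := hpsum 0 hiv
        simpa [Finset.sum_range_one] using h0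
      | succ k =>
        have h1 := hpsum (k + 1) hiv
        have h2 := hpsum k (by omega)
        simp only [Finset.sum_range_succ] at h1 h2
        omega
    simpa [ext, hiv] using hde
  have hle : D.card ≤ (Finset.powersetCard n (Finset.range (2 * n))).card :=
    Finset.card_le_card_of_injOn f hmaps hinj
  rw [Finset.card_powersetCard, Finset.card_range] at hle
  have hchoose : (2 * n).choose n < 4 ^ n := by
    have hsum := Nat.sum_range_choose (2 * n)
    have h4 : (4 : ℕ) ^ n = 2 ^ (2 * n) := by
      rw [pow_mul]; norm_num
    have hlt : (2 * n).choose n < ∑ i ∈ Finset.range (2 * n + 1), (2 * n).choose i :=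
      Finset.single_lt_sum (f := fun i => (2 * n).choose i) (i := n) (j := 0)
        (by omega) (Finset.mem_range.mpr (by omega)) (Finset.mem_range.mpr (by omega))
        (by simp) (fun k _ _ => Nat.zero_le _)
    omega
  omega

end Aux

/-- If `|V| ≥ 4^n`, then there is a point `v ∈ V` such that every almost cover
of `V` and `v` consists of more than `n` affine hyperplanes. -/
theorem almost_cover_lower_bound_four_pow {F : Type*} [Field F] {n : ℕ} (hn : 1 ≤ n)
    (V : Finset (Fin n → F)) (hV : 4 ^ n ≤ V.card) :
    ∃ v ∈ V, ∀ (m : ℕ) (H : Fin m → Set (Fin n → F)),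
      (∀ j, IsAffineHyperplane (H j)) →
      (↑V \ {v} : Set (Fin n → F)) ⊆ ⋃ j, H j →
      v ∉ ⋃ j, H j → n < m := by
  classical
  by_contra hcon
  push_neg at hcon
  -- For every v ∈ V there are m ≤ n linear forms vanishing on V \ {v} but not at v.
  have h' : ∀ v : ↥V, ∃ (m : ℕ), m ≤ n ∧ ∃ (a : Fin m → Fin n → F) (c : Fin m → F),
      (∀ j, (∑ i, a j i * (v : Fin n → F) i) ≠ c j) ∧
      (∀ u : ↥V, u ≠ v → ∃ j, ∑ i, a j i * (u : Fin n → F) i = c j) := by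
    intro v
    obtain ⟨m, H, hH, hcov, hmiss, hmle⟩ := hcon v v.2
    choose a c hane hHeq using hH
    refine ⟨m, hmle, a, c, ?_, ?_⟩
    · intro j hj
      exact hmiss (Set.mem_iUnion.mpr ⟨j, by rw [hHeq j]; exact hj⟩)
    · intro u hu
      have hu1 : (u : Fin n → F) ∈ (↑V \ {(v : Fin n → F)} : Set (Fin n → F)) :=
        ⟨u.2, fun h => hu (Subtype.ext h)⟩
      obtain ⟨j, hj⟩ := Set.mem_iUnion.mp (hcov hu1)
      rw [hHeq j] at hj
      exact ⟨j, hj⟩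
  choose m hmle a c hdiag hoff using h'
  set f : ↥V → (↥V → F) :=
    fun v u => ∏ j : Fin (m v), (∑ i, a v j i * (u : Fin n → F) i - c v j) with hf
  have hfS : ∀ v, f v ∈ TT V n :=
    fun v => TT_mono V (hmle v) (prod_aff_mem V (m v) (a v) (c v))
  have hfvv : ∀ v, f v v ≠ 0 := by
    intro v
    rw [hf]
    rw [Finset.prod_ne_zero_iff]
    intro j _
    exact sub_ne_zero.mpr (hdiag v j)
  have hfvu : ∀ v u, u ≠ v → f v u = 0 := by
    intro v u hu
    obtain ⟨j, hj⟩ := hoff v u hu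
    exact Finset.prod_eq_zero (Finset.mem_univ j) (sub_eq_zero.mpr hj)
  -- linear independence
  have hlin : LinearIndependent F f := by
    rw [Fintype.linearIndependent_iff]
    intro g hg i
    have hi := congrFun hg i
    simp only [Finset.sum_apply, Pi.smul_apply, smul_eq_mul, Pi.zero_apply] at hi
    have hsingle : ∑ j, g j * f j i = g i * f i i := by
      apply Finset.sum_eq_single
      · intro b _ hb
        rw [hfvu b i (Ne.symm hb), mul_zero]
      · intro h; exact absurd (Finset.mem_univ i) h
    rw [hsingle] at hi
    exact (mul_eq_zero.mp hi).resolve_right (hfvv i)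
  -- lift into the finite-dimensional span of monomials
  set D := (Fintype.piFinset fun _ : Fin n => Finset.range (n + 1)).filter
      (fun d => ∑ i, d i ≤ n) with hD
  have hTT : TT V n
      = Submodule.span F ((D.image (monV V) : Finset (↥V → F)) : Set (↥V → F)) := by
    rw [TT]
    congr 1
    ext g
    simp only [Set.mem_setOf_eq, Finset.coe_image, Set.mem_image, Finset.mem_coe, hD,
      Finset.mem_filter, Fintype.mem_piFinset, Finset.mem_range]
    constructor
    · rintro ⟨d, hd, rfl⟩
      refine ⟨d, ⟨fun i => ?_, hd⟩, rfl⟩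
      have : d i ≤ ∑ k, d k :=
        Finset.single_le_sum (fun _ _ => Nat.zero_le _) (Finset.mem_univ i)
      omega
    · rintro ⟨d, ⟨_, hd⟩, rfl⟩
      exact ⟨d, hd, rfl⟩
  haveI hFD : FiniteDimensional F (TT V n) := by rw [hTT]; infer_instance
  have hlin' : LinearIndependent F (fun v : ↥V => (⟨f v, hfS v⟩ : ↥(TT V n))) := by
    apply LinearIndependent.of_comp (TT V n).subtype
    exact hlin
  have h1 : Fintype.card ↥V ≤ Module.finrank F (TT V n) := hlin'.fintype_card_le_finrank
  have h2 : Module.finrank F (TT V n) ≤ (D.image (monV V)).card := by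
    rw [hTT]; exact finrank_span_finset_le_card _
  have h3 : (D.image (monV V)).card ≤ D.card := Finset.card_image_le
  have h4 := card_expvec_lt n hn
  rw [← hD] at h4
  rw [Fintype.card_coe] at h1
  omega
end

section
/- Let F be a field, n ≥ 1, and let V ⊆ F^n be a non-empty finite set of points. Then there exists a point v ∈ V such that every almost cover of V and v by affine hyperplanes H_1, …, H_m satisfies m > (n · |V|^{1/n})/e − n, where e is Euler's number and |V|^{1/n} is the real n-th root of the cardinality of V. -/
open Finset Submodule

section Mono
variable {F : Type*} [Field F] {n : ℕ}

/-- Monomial functions. -/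
noncomputable def monoF (d : Fin n → ℕ) : (Fin n → F) → F := fun x => ∏ i, x i ^ d i

lemma monoF_mem {d : Fin n → ℕ} {k : ℕ} (hd : ∑ i, d i ≤ k) :
    (monoF d : (Fin n → F) → F) ∈ span F (monoF '' {d : Fin n → ℕ | ∑ i, d i ≤ k}) :=
  subset_span ⟨d, hd, rfl⟩

lemma monoF_span_mono {k l : ℕ} (hkl : k ≤ l) :
    span F (monoF '' {d : Fin n → ℕ | ∑ i, d i ≤ k}) ≤
      span F (monoF (F := F) '' {d : Fin n → ℕ | ∑ i, d i ≤ l}) :=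
  span_mono (Set.image_mono (fun d hd => le_trans hd hkl))

lemma span_mul_linear (a : Fin n → F) (c : F) (k : ℕ) (f : (Fin n → F) → F)
    (hf : f ∈ span F (monoF '' {d : Fin n → ℕ | ∑ i, d i ≤ k})) :
    (fun x => (∑ i, a i * x i - c) * f x) ∈
      span F (monoF (F := F) '' {d : Fin n → ℕ | ∑ i, d i ≤ k + 1}) := by
  induction hf using Submodule.span_induction with
  | mem g hg =>
    obtain ⟨d, hd, rfl⟩ := hg
    have key : (fun x => (∑ i, a i * x i - c) * monoF d x)
        = (∑ i, a i • monoF (d + Pi.single i 1)) - c • (monoF d : (Fin n → F) → F) := by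
      funext x
      have hupd : ∀ i : Fin n, (monoF (d + Pi.single i 1) : (Fin n → F) → F) x
          = x i * monoF d x := by
        intro i
        simp only [monoF, Pi.add_apply, pow_add]
        rw [Finset.prod_mul_distrib]
        have : ∏ j, x j ^ (Pi.single i 1 : Fin n → ℕ) j = x i := by
          rw [Finset.prod_eq_single i]
          · simp
          · intro j _ hj; simp [Pi.single_apply, hj]
          · simp
        rw [this, mul_comm]
      simp only [Finset.sum_apply, Pi.sub_apply, Pi.smul_apply, smul_eq_mul]
      rw [sub_mul, Finset.sum_mul]
      congr 1
      refine Finset.sum_congr rfl fun i _ => ?_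
      rw [hupd i]; ring
    rw [key]
    refine sub_mem (sum_mem fun i _ => smul_mem _ _ (monoF_mem (by
      have hd' : ∑ j, d j ≤ k := hd
      calc ∑ j, ((d + Pi.single i 1 : Fin n → ℕ) j)
          = (∑ j, d j) + ∑ j, (Pi.single i 1 : Fin n → ℕ) j := Finset.sum_add_distrib
        _ = (∑ j, d j) + 1 := by rw [Finset.sum_pi_single']; simp
        _ ≤ k + 1 := by omega)))
      (smul_mem _ _ (monoF_mem (le_trans hd (Nat.le_succ k))))
  | zero =>
    convert zero_mem (span F (monoF (F := F) '' {d : Fin n → ℕ | ∑ i, d i ≤ k + 1})) using 1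
    funext x; simp
  | add g h _ _ ihg ihh =>
    have : (fun x => (∑ i, a i * x i - c) * (g + h) x)
        = (fun x => (∑ i, a i * x i - c) * g x) + fun x => (∑ i, a i * x i - c) * h x := by
      funext x; simp [mul_add]
    rw [this]; exact add_mem ihg ihh
  | smul t g _ ihg =>
    have : (fun x => (∑ i, a i * x i - c) * (t • g) x)
        = t • fun x => (∑ i, a i * x i - c) * g x := by
      funext x; simp [smul_eq_mul]; ring
    rw [this]; exact smul_mem _ _ ihg

lemma prod_linear_mem_span (m : ℕ) (a : Fin m → Fin n → F) (c : Fin m → F) :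
    (fun x => ∏ j, (∑ i, a j i * x i - c j)) ∈
      span F (monoF (F := F) '' {d : Fin n → ℕ | ∑ i, d i ≤ m}) := by
  induction m with
  | zero =>
    have : (fun x : Fin n → F => ∏ j : Fin 0, (∑ i, a j i * x i - c j)) = monoF 0 := by
      funext x; simp [monoF]
    rw [this]; exact monoF_mem (by simp)
  | succ m ih =>
    have : (fun x : Fin n → F => ∏ j : Fin (m + 1), (∑ i, a j i * x i - c j))
        = fun x => (∑ i, a (Fin.last m) i * x i - c (Fin.last m)) *
            ∏ j : Fin m, (∑ i, a j.castSucc i * x i - c j.castSucc) := by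
      funext x; rw [Fin.prod_univ_castSucc]; ring
    rw [this]
    exact span_mul_linear _ _ _ _ (ih (fun j => a j.castSucc) (fun j => c j.castSucc))

end Mono

open Finset Submodule

lemma multiset_card_sum {α β : Type*} (s : Finset β) (g : β → Multiset α) :
    Multiset.card (∑ b ∈ s, g b) = ∑ b ∈ s, Multiset.card (g b) := by
  classical
  induction s using Finset.induction with
  | empty => simp
  | insert a s h ih => simp [Finset.sum_insert h, ih]

lemma card_degree_le (n M : ℕ) :
    (Finset.filter (fun d : Fin n → ℕ => ∑ i, d i ≤ M)
      (Fintype.piFinset fun _ => Finset.range (M + 1))).card ≤ (M + n).choose n := by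
  classical
  set D := Finset.filter (fun d : Fin n → ℕ => ∑ i, d i ≤ M)
      (Fintype.piFinset fun _ => Finset.range (M + 1)) with hD
  set t : Finset (Multiset (Fin (n + 1))) :=
    Finset.univ.image (fun s : Sym (Fin (n + 1)) M => (s : Multiset (Fin (n + 1)))) with ht
  have hcard_t : t.card = (M + n).choose n := by
    rw [ht, Finset.card_image_of_injective _ Sym.coe_injective, Finset.card_univ,
      Sym.card_sym_eq_multichoose, Nat.multichoose_eq, Fintype.card_fin]
    have h1 : n + 1 + M - 1 = M + n := by omega
    rw [h1]
    have h2 : (M + n).choose M = (M + n).choose (M + n - M) := by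
      rw [Nat.choose_symm (Nat.le_add_right M n)]
    rw [h2]
    congr 1
    omega
  set f : (Fin n → ℕ) → Multiset (Fin (n + 1)) := fun d =>
    Multiset.replicate (M - ∑ i, d i) (Fin.last n) +
      ∑ i, Multiset.replicate (d i) i.castSucc with hf
  have hcount : ∀ d : Fin n → ℕ, ∀ i : Fin n, (f d).count i.castSucc = d i := by
    intro d i
    rw [hf]
    simp only [Multiset.count_add, Multiset.count_sum', Multiset.count_replicate]
    have h1 : (if (Fin.last n : Fin (n + 1)) = i.castSucc then M - ∑ j, d j else 0) = 0 :=
      if_neg (Ne.symm (Fin.ne_of_lt i.castSucc_lt_last))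
    have h2 : ∀ j : Fin n, (if (j.castSucc : Fin (n + 1)) = i.castSucc then d j else 0)
        = if j = i then d j else 0 := by
      intro j; simp [Fin.castSucc_inj]
    rw [h1, zero_add, Finset.sum_congr rfl fun j _ => h2 j, Finset.sum_ite_eq' Finset.univ i d]
    simp
  have hinj : Set.InjOn f D := by
    intro d hd d' hd' heq
    funext i
    rw [← hcount d i, ← hcount d' i, heq]
  have hmaps : ∀ d ∈ D, f d ∈ t := by
    intro d hd
    have hdle : ∑ i, d i ≤ M := (Finset.mem_filter.mp hd).2
    have hcard : Multiset.card (f d) = M := by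
      rw [hf]
      simp only [Multiset.card_add, Multiset.card_replicate]
      rw [multiset_card_sum]
      simp only [Multiset.card_replicate]
      omega
    exact Finset.mem_image.mpr ⟨⟨f d, hcard⟩, Finset.mem_univ _, rfl⟩
  calc D.card ≤ t.card := Finset.card_le_card_of_injOn f hmaps hinj
    _ = (M + n).choose n := hcard_t

lemma ana {n m N : ℕ} (hn : 1 ≤ n) (hN : 1 ≤ N) (h : N ≤ (m + n).choose n) :
    (n : ℝ) * (N : ℝ) ^ (1 / (n : ℝ)) / Real.exp 1 - n < m := by
  have hnR : (0 : ℝ) < n := by exact_mod_cast hn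
  have hNR : (0 : ℝ) < N := by exact_mod_cast hN
  have h1 : N * n.factorial ≤ (m + n) ^ n := by
    calc N * n.factorial ≤ (m + n).choose n * n.factorial := Nat.mul_le_mul_right _ h
      _ = (m + n).descFactorial n := by
          rw [Nat.descFactorial_eq_factorial_mul_choose]; ring
      _ ≤ (m + n) ^ n := Nat.descFactorial_le_pow _ _
  have h2 : (n : ℝ) ^ n < n.factorial * Real.exp 1 ^ n := by
    have hs : ∑ i ∈ Finset.range (n + 1), (n : ℝ) ^ i / i.factorial ≤ Real.exp n :=
      Real.sum_le_exp_of_nonneg (by positivity) _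
    rw [Finset.sum_range_succ] at hs
    have hpos1 : (1 : ℝ) ≤ ∑ i ∈ Finset.range n, (n : ℝ) ^ i / i.factorial := by
      have hmem : (0 : ℕ) ∈ Finset.range n := Finset.mem_range.mpr (by omega)
      have := Finset.single_le_sum (f := fun i => (n : ℝ) ^ i / i.factorial)
        (fun i _ => by positivity) hmem
      simpa using this
    have hlt : (n : ℝ) ^ n / n.factorial < Real.exp n := by linarith
    have hexp : Real.exp (n : ℝ) = Real.exp 1 ^ n := by
      rw [← Real.exp_nat_mul, mul_one]
    have hfac : (0 : ℝ) < (n.factorial : ℝ) := by positivity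
    rw [div_lt_iff₀ hfac] at hlt
    rw [hexp] at hlt
    linarith [hlt]
  have h1R : (N : ℝ) * n.factorial ≤ ((m : ℝ) + n) ^ n := by
    have := h1
    push_cast
    exact_mod_cast this
  have key : (N : ℝ) < (((m : ℝ) + n) * Real.exp 1 / n) ^ n := by
    rw [div_pow, lt_div_iff₀ (by positivity : (0 : ℝ) < (n : ℝ) ^ n), mul_pow]
    calc (N : ℝ) * (n : ℝ) ^ n < (N : ℝ) * (n.factorial * Real.exp 1 ^ n) := by
          exact mul_lt_mul_of_pos_left h2 hNR
      _ = ((N : ℝ) * n.factorial) * Real.exp 1 ^ n := by ring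
      _ ≤ ((m : ℝ) + n) ^ n * Real.exp 1 ^ n :=
          mul_le_mul_of_nonneg_right h1R (by positivity)
  set B := ((m : ℝ) + n) * Real.exp 1 / n with hB
  have hBpos : 0 < B := by positivity
  have hr : (N : ℝ) ^ (1 / (n : ℝ)) < B := by
    have h3 : (N : ℝ) ^ (1 / (n : ℝ)) < (B ^ n) ^ (1 / (n : ℝ)) :=
      Real.rpow_lt_rpow (Nat.cast_nonneg N) key (by positivity)
    have h4 : (B ^ n) ^ (1 / (n : ℝ)) = B := by
      rw [← Real.rpow_natCast B n, ← Real.rpow_mul hBpos.le, mul_one_div,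
        div_self (ne_of_gt hnR), Real.rpow_one]
    rwa [h4] at h3
  rw [sub_lt_iff_lt_add, div_lt_iff₀ (Real.exp_pos 1)]
  have := (lt_div_iff₀ hnR).mp hr
  nlinarith [this]

lemma core {F : Type*} [Field F] {n : ℕ} (V : Finset (Fin n → F)) (hV : V.Nonempty) :
    ∃ v ∈ V, ∀ (m : ℕ) (H : Fin m → Set (Fin n → F)),
      (∀ j, IsAffineHyperplane (H j)) →
      (↑V \ {v} : Set (Fin n → F)) ⊆ ⋃ j, H j →
      v ∉ ⋃ j, H j → V.card ≤ (m + n).choose n := by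
  classical
  by_contra hcon
  push_neg at hcon
  choose! m H hH hcov hnot hlt using hcon
  set M := V.sup m with hM
  obtain ⟨v₀, hv₀, hMv₀⟩ := Finset.exists_mem_eq_sup V hV m
  have hH' : ∀ v ∈ V, ∀ j : Fin (m v), ∃ a : Fin n → F, ∃ c : F,
      a ≠ 0 ∧ H v j = {x : Fin n → F | ∑ i, a i * x i = c} := fun v hv j => hH v hv j
  choose! a c hane heq using hH'
  set P : (Fin n → F) → (Fin n → F) → F :=
    fun v x => ∏ j, (∑ i, a v j i * x i - c v j) with hPdef
  -- `P v` does not vanish at `v`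
  have hPv : ∀ v ∈ V, P v v ≠ 0 := by
    intro v hv
    rw [hPdef]
    rw [Finset.prod_ne_zero_iff]
    intro j _ hj0
    apply hnot v hv
    apply Set.mem_iUnion.mpr ⟨j, ?_⟩
    rw [heq v hv j]
    exact sub_eq_zero.mp hj0
  -- `P v` vanishes on `V \ {v}`
  have hPw : ∀ v ∈ V, ∀ w ∈ V, w ≠ v → P v w = 0 := by
    intro v hv w hw hwv
    have hmem : w ∈ (↑V \ {v} : Set (Fin n → F)) := ⟨hw, by simpa using hwv⟩
    obtain ⟨j, hj⟩ := Set.mem_iUnion.mp (hcov v hv hmem)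
    rw [heq v hv j] at hj
    rw [hPdef]
    exact Finset.prod_eq_zero (Finset.mem_univ j) (sub_eq_zero.mpr hj)
  -- `P v` is in the span of the monomials of degree at most `M`
  have hPspan : ∀ v ∈ V,
      P v ∈ span F (monoF (F := F) '' {d : Fin n → ℕ | ∑ i, d i ≤ M}) := by
    intro v hv
    exact monoF_span_mono (Finset.le_sup hv) (prod_linear_mem_span (m v) (a v) (c v))
  -- restriction to V
  let R : ((Fin n → F) → F) →ₗ[F] (↥V → F) := LinearMap.funLeft F F (fun w : ↥V => ↑w)
  let g : ↥V → (↥V → F) := fun v => R (P ↑v)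
  let u : ↥V → Fˣ := fun v => Units.mk0 (P ↑v ↑v) (hPv ↑v v.2)
  have hg : g = u • ⇑(Pi.basisFun F ↥V) := by
    funext v w
    have : g v w = P ↑v ↑w := rfl
    rw [this, Pi.smul_apply', Pi.basisFun_apply, Pi.smul_apply, Pi.single_apply]
    by_cases hwv : w = v
    · subst hwv; simp [u]
    · have : (↑w : Fin n → F) ≠ ↑v := fun hc => hwv (Subtype.ext hc)
      rw [hPw ↑v v.2 ↑w w.2 this, if_neg hwv]
      simp
  have hind : LinearIndependent F g := by
    rw [hg]
    exact (Pi.basisFun F ↥V).linearIndependent.units_smul u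
  -- span containment in the image of the monomials
  set D : Finset (Fin n → ℕ) := Finset.filter (fun d : Fin n → ℕ => ∑ i, d i ≤ M)
      (Fintype.piFinset fun _ => Finset.range (M + 1)) with hD
  set W : Finset (↥V → F) := D.image (fun d => R (monoF d)) with hW
  have hrange : Set.range g ≤ ↑(span F (↑W : Set (↥V → F))) := by
    rintro _ ⟨v, rfl⟩
    have h1 : R (P ↑v) ∈ span F (⇑R '' (monoF '' {d : Fin n → ℕ | ∑ i, d i ≤ M})) :=
      Submodule.apply_mem_span_image_of_mem_span R (hPspan ↑v v.2)
    refine span_mono ?_ h1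
    rintro _ ⟨_, ⟨d, hd, rfl⟩, rfl⟩
    refine Finset.mem_coe.mpr (Finset.mem_image.mpr ⟨d, ?_, rfl⟩)
    rw [hD, Finset.mem_filter]
    refine ⟨Fintype.mem_piFinset.mpr fun i => Finset.mem_range.mpr ?_, hd⟩
    have : d i ≤ ∑ j, d j :=
      Finset.single_le_sum (f := d) (fun j _ => Nat.zero_le _) (Finset.mem_univ i)
    have hdM : ∑ j, d j ≤ M := hd
    omega
  have hcard := linearIndependent_le_span' g hind ↑W hrange
  rw [Cardinal.mk_coe_finset] at hcard
  have hcard2 : V.card ≤ Fintype.card ↑(↑W : Set (↥V → F)) := by exact_mod_cast hcard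
  have hcard3 : Fintype.card ↑(↑W : Set (↥V → F)) = W.card := by
    simp
  have hWD : W.card ≤ D.card := by rw [hW]; exact Finset.card_image_le
  have hDM : D.card ≤ (M + n).choose n := card_degree_le n M
  have hfin : (m v₀ + n).choose n < V.card := hlt v₀ hv₀
  rw [← hMv₀, ← hM] at hfin
  omega


/-- If `V` is nonempty, then there is a point `v ∈ V` such that every almost
cover of `V` and `v` consists of more than `n·|V|^{1/n}/e − n` affine
hyperplanes. -/
theorem almost_cover_lower_bound_root {F : Type*} [Field F] {n : ℕ} (hn : 1 ≤ n)
    (V : Finset (Fin n → F)) (hV : V.Nonempty) :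
    ∃ v ∈ V, ∀ (m : ℕ) (H : Fin m → Set (Fin n → F)),
      (∀ j, IsAffineHyperplane (H j)) →
      (↑V \ {v} : Set (Fin n → F)) ⊆ ⋃ j, H j →
      v ∉ ⋃ j, H j →
      (n : ℝ) * (V.card : ℝ) ^ (1 / (n : ℝ)) / Real.exp 1 - n < m := by
  obtain ⟨v, hv, hcore⟩ := core V hV
  refine ⟨v, hv, fun m H h1 h2 h3 => ?_⟩
  exact ana hn (Finset.card_pos.mpr hV) (hcore m H h1 h2 h3)
end

section
/- Let F be a field, and let V ⊆ {0,1}^n ⊆ F^n be a set of 0-1 vectors. Let 0 ≤ k ≤ n be integers such that ∑_{i=0}^{k} C(n,i) < |V|. Then there exists a point v ∈ V such that every almost cover of V and v consists of more than k affine hyperplanes; that is, whenever affine hyperplanes H_1, …, H_m satisfy V \ {v} ⊆ H_1 ∪ ⋯ ∪ H_m and v ∉ H_1 ∪ ⋯ ∪ H_m, it follows that m > k. -/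
open Finset

section Aux

variable {F : Type*} [Field F] {n : ℕ}

/-- Multilinear monomial restricted to a finite point set. -/
def cubeMon (V : Finset (Fin n → F)) (S : Finset (Fin n)) : ↥V → F :=
  fun w => ∏ i ∈ S, (w : Fin n → F) i

lemma cubeMon_mul_var (V : Finset (Fin n → F)) (hV01 : ∀ v ∈ V, ∀ i, v i = 0 ∨ v i = 1)
    (S : Finset (Fin n)) (i : Fin n) (w : ↥V) :
    (w : Fin n → F) i * cubeMon V S w = cubeMon V (insert i S) w := by
  by_cases hi : i ∈ S
  · rw [Finset.insert_eq_self.2 hi]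
    rcases hV01 w w.2 i with h | h
    · rw [h, zero_mul, cubeMon, Finset.prod_eq_zero hi h]
    · rw [h, one_mul]
  · rw [cubeMon, cubeMon, Finset.prod_insert hi]

/-- Multiplication by an affine form sends the span of monomials of degree ≤ d
into the span of monomials of degree ≤ d + 1. -/
lemma span_step (V : Finset (Fin n → F)) (hV01 : ∀ v ∈ V, ∀ i, v i = 0 ∨ v i = 1)
    (d : ℕ) (a : Fin n → F) (c : F) (f : ↥V → F)
    (hf : f ∈ Submodule.span F (cubeMon V '' {S | S.card ≤ d})) :
    (fun w : ↥V => (∑ i, a i * (w : Fin n → F) i - c) * f w) ∈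
      Submodule.span F (cubeMon V '' {S | S.card ≤ d + 1}) := by
  induction hf using Submodule.span_induction with
  | mem g hg =>
    obtain ⟨S, hS, rfl⟩ := hg
    have key : (fun w : ↥V => (∑ i, a i * (w : Fin n → F) i - c) * cubeMon V S w) =
        (∑ i : Fin n, a i • cubeMon V (insert i S)) - c • cubeMon V S := by
      funext w
      simp only [Pi.sub_apply, Finset.sum_apply, Pi.smul_apply, smul_eq_mul, sub_mul,
        Finset.sum_mul]
      congr 1
      refine Finset.sum_congr rfl fun i _ => ?_
      rw [mul_assoc, cubeMon_mul_var V hV01 S i w]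
    rw [key]
    refine Submodule.sub_mem _ (Submodule.sum_mem _ fun i _ => Submodule.smul_mem _ _ ?_)
      (Submodule.smul_mem _ _ ?_)
    · exact Submodule.subset_span ⟨insert i S, by
        simpa using (Finset.card_insert_le i S).trans (Nat.add_le_add_right hS 1), rfl⟩
    · exact Submodule.subset_span ⟨S, le_trans hS (Nat.le_succ d), rfl⟩
  | zero =>
    have : (fun w : ↥V => (∑ i, a i * (w : Fin n → F) i - c) * (0 : ↥V → F) w) =
        (0 : ↥V → F) := by funext w; simp
    rw [this]; exact Submodule.zero_mem _
  | add g h _ _ hg hh =>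
    have : (fun w : ↥V => (∑ i, a i * (w : Fin n → F) i - c) * (g + h) w) =
        (fun w : ↥V => (∑ i, a i * (w : Fin n → F) i - c) * g w) +
        (fun w : ↥V => (∑ i, a i * (w : Fin n → F) i - c) * h w) := by
      funext w; simp [mul_add]
    rw [this]; exact Submodule.add_mem _ hg hh
  | smul t g _ hg =>
    have : (fun w : ↥V => (∑ i, a i * (w : Fin n → F) i - c) * (t • g) w) =
        t • fun w : ↥V => (∑ i, a i * (w : Fin n → F) i - c) * g w := by
      funext w; simp [smul_eq_mul]; ring
    rw [this]; exact Submodule.smul_mem _ _ hg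

lemma span_prod (V : Finset (Fin n → F)) (hV01 : ∀ v ∈ V, ∀ i, v i = 0 ∨ v i = 1) :
    ∀ (m : ℕ) (a : Fin m → Fin n → F) (c : Fin m → F),
    (fun w : ↥V => ∏ j, (∑ i, a j i * (w : Fin n → F) i - c j)) ∈
      Submodule.span F (cubeMon V '' {S | S.card ≤ m}) := by
  intro m
  induction m with
  | zero =>
    intro a c
    have : (fun w : ↥V => ∏ j : Fin 0, (∑ i, a j i * (w : Fin n → F) i - c j)) =
        cubeMon V ∅ := by
      funext w; simp [cubeMon]
    rw [this]
    exact Submodule.subset_span ⟨∅, by simp, rfl⟩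
  | succ m ih =>
    intro a c
    have : (fun w : ↥V => ∏ j : Fin (m+1), (∑ i, a j i * (w : Fin n → F) i - c j)) =
        fun w : ↥V => (∑ i, a 0 i * (w : Fin n → F) i - c 0) *
          (fun w : ↥V => ∏ j : Fin m, (∑ i, a j.succ i * (w : Fin n → F) i - c j.succ)) w := by
      funext w; rw [Fin.prod_univ_succ]
    rw [this]
    exact span_step V hV01 m _ _ _ (ih _ _)

end Aux

/-- **Lower bound for almost covers of 0-1 point sets.** If `V` consists of
0-1 vectors and `∑_{i=0}^{k} C(n,i) < |V|`, then there is a point `v ∈ V`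
such that every almost cover of `V` and `v` consists of more than `k` affine
hyperplanes. -/
theorem almost_cover_lower_bound_cube {F : Type*} [Field F] {n k : ℕ} (hkn : k ≤ n)
    (V : Finset (Fin n → F)) (hV01 : ∀ v ∈ V, ∀ i, v i = 0 ∨ v i = 1)
    (hk : ∑ i ∈ Finset.range (k + 1), n.choose i < V.card) :
    ∃ v ∈ V, ∀ (m : ℕ) (H : Fin m → Set (Fin n → F)),
      (∀ j, IsAffineHyperplane (H j)) →
      (↑V \ {v} : Set (Fin n → F)) ⊆ ⋃ j, H j →
      v ∉ ⋃ j, H j → k < m := by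
  classical
  by_contra hcon
  push_neg at hcon
  -- every delta function lies in the span of low-degree monomials
  have hdelta : ∀ v : ↥V, (Pi.single v 1 : ↥V → F) ∈
      Submodule.span F (cubeMon V '' {S | S.card ≤ k}) := by
    intro v
    obtain ⟨m, H, hHyp, hcov, hmiss, hmk⟩ := hcon v v.2
    choose a c ha hHeq using hHyp
    set P : ↥V → F := fun w => ∏ j, (∑ i, a j i * (w : Fin n → F) i - c j) with hP
    have hPmem : P ∈ Submodule.span F (cubeMon V '' {S | S.card ≤ k}) := by
      refine Submodule.span_mono (Set.image_mono ?_) (span_prod V hV01 m a c)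
      exact fun S hS => le_trans hS hmk
    have hPv : P v ≠ 0 := by
      refine Finset.prod_ne_zero_iff.2 fun j _ => ?_
      intro h
      apply hmiss
      refine Set.mem_iUnion.2 ⟨j, ?_⟩
      rw [hHeq j]
      simpa using sub_eq_zero.1 h
    have hPw : ∀ w : ↥V, w ≠ v → P w = 0 := by
      intro w hw
      have hwmem : (w : Fin n → F) ∈ (↑V \ {(v : Fin n → F)} : Set (Fin n → F)) := by
        refine ⟨w.2, ?_⟩
        simp only [Set.mem_singleton_iff]
        exact fun h => hw (Subtype.ext h)
      obtain ⟨j, hj⟩ := Set.mem_iUnion.1 (hcov hwmem)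
      rw [hHeq j] at hj
      refine Finset.prod_eq_zero (Finset.mem_univ j) ?_
      rw [sub_eq_zero]
      exact hj
    have hsingle : (Pi.single v 1 : ↥V → F) = (P v)⁻¹ • P := by
      funext w
      by_cases hw : w = v
      · subst hw
        simp [Pi.single_apply, inv_mul_cancel₀ hPv]
      · simp [Pi.single_apply, hw, hPw w hw]
    rw [hsingle]
    exact Submodule.smul_mem _ _ hPmem
  -- hence the span is everything
  have hspan : Submodule.span F (cubeMon V '' {S | S.card ≤ k}) = ⊤ := by
    rw [eq_top_iff]
    intro f _
    have hf : f = ∑ w : ↥V, f w • (Pi.single w 1 : ↥V → F) := by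
      funext x
      simp [Pi.single_apply, Finset.sum_ite_eq' (Finset.univ : Finset ↥V) x]
    rw [hf]
    exact Submodule.sum_mem _ fun w _ => Submodule.smul_mem _ _ (hdelta w)
  -- dimension count
  set T : Finset (Finset (Fin n)) := Finset.univ.filter (fun S => S.card ≤ k) with hT
  have himg : cubeMon V '' {S | S.card ≤ k} = ↑(T.image (cubeMon V)) := by
    ext f
    simp [hT]
  have hTcard : T.card = ∑ i ∈ Finset.range (k + 1), n.choose i := by
    have : T = (Finset.range (k + 1)).biUnion
        (fun i => Finset.powersetCard i (Finset.univ : Finset (Fin n))) := by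
      ext S
      simp only [hT, Finset.mem_filter, Finset.mem_univ, true_and, Finset.mem_biUnion,
        Finset.mem_range, Finset.mem_powersetCard]
      constructor
      · intro h; exact ⟨S.card, Nat.lt_succ_of_le h, Finset.subset_univ S, rfl⟩
      · rintro ⟨i, hi, -, rfl⟩; exact Nat.lt_succ_iff.1 hi
    rw [this, Finset.card_biUnion]
    · refine Finset.sum_congr rfl fun i _ => ?_
      rw [Finset.card_powersetCard, Finset.card_univ, Fintype.card_fin]
    · intro i _ j _ hij
      refine Finset.disjoint_left.2 fun S hSi hSj => ?_
      rw [Finset.mem_powersetCard] at hSi hSj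
      exact hij (hSi.2 ▸ hSj.2)
  have hrank : V.card ≤ ∑ i ∈ Finset.range (k + 1), n.choose i := by
    have h1 : Module.finrank F (↥V → F) = V.card := by
      rw [Module.finrank_pi, Fintype.card_coe]
    have h2 : Module.finrank F (↥V → F) ≤ (T.image (cubeMon V)).card := by
      have := finrank_span_finset_le_card (R := F) (T.image (cubeMon V))
      rw [Set.finrank, ← himg, hspan, finrank_top] at this
      exact this
    calc V.card = Module.finrank F (↥V → F) := h1.symm
      _ ≤ (T.image (cubeMon V)).card := h2
      _ ≤ T.card := Finset.card_image_le
      _ = _ := hTcard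
  exact absurd hrank (not_le.2 hk)
end

section
/- Let F be a field, and let V ⊆ {0,1}^n ⊆ F^n be a set of 0-1 vectors. Let 0 ≤ k ≤ n be integers such that ∑_{i=0}^{k} C(n,i) < |V|. Then there exists a point y ∈ V such that every polynomial f ∈ F[x_1,…,x_n] which vanishes at every point of V \ {y} but satisfies f(y) ≠ 0 has total degree deg(f) > k. -/
open MvPolynomial Finset

/-- **Polynomial form of the almost-cover lower bound for 0-1 point sets.**
If `V` consists of 0-1 vectors and `∑_{i=0}^{k} C(n,i) < |V|`, then there is a
point `y ∈ V` such that every polynomial vanishing on `V \ {y}` but not at `y`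
has total degree greater than `k`. -/
theorem almost_cover_lower_bound_cube_poly {F : Type*} [Field F] {n k : ℕ} (hkn : k ≤ n)
    (V : Finset (Fin n → F)) (hV01 : ∀ v ∈ V, ∀ i, v i = 0 ∨ v i = 1)
    (hk : ∑ i ∈ Finset.range (k + 1), n.choose i < V.card) :
    ∃ y ∈ V, ∀ f : MvPolynomial (Fin n) F,
      (∀ w ∈ V, w ≠ y → MvPolynomial.eval w f = 0) →
      MvPolynomial.eval y f ≠ 0 → k < f.totalDegree := by
  classical
  by_contra h
  push_neg at h
  choose f hf0 hfy hfd using h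
  -- the set of multilinear monomials of degree ≤ k
  set T : Finset (Finset (Fin n)) :=
    (Finset.range (k + 1)).biUnion (fun i => (Finset.univ : Finset (Fin n)).powersetCard i)
    with hT
  have hTcard : T.card = ∑ i ∈ Finset.range (k + 1), n.choose i := by
    rw [hT, Finset.card_biUnion]
    · refine Finset.sum_congr rfl fun i _ => ?_
      rw [Finset.card_powersetCard, Finset.card_univ, Fintype.card_fin]
    · intro x _ y _ hxy
      simp only [Finset.disjoint_left, Finset.mem_powersetCard]
      rintro s ⟨-, h1⟩ ⟨-, h2⟩
      exact hxy (h1.symm.trans h2)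
  let m : Finset (Fin n) → (V → F) := fun s v => ∏ i ∈ s, (v : Fin n → F) i
  let p : Submodule F (V → F) := Submodule.span F ((T.image m : Finset (V → F)) : Set (V → F))
  -- evaluation functions
  let e : V → (V → F) := fun y w => MvPolynomial.eval (w : Fin n → F) (f y y.2)
  have he_mem : ∀ y : V, e y ∈ p := by
    intro y
    have hey : e y = ∑ α ∈ (f y y.2).support, (f y y.2).coeff α • m α.support := by
      funext w
      have hw01 := hV01 w w.2
      simp only [e, Finset.sum_apply, Pi.smul_apply, smul_eq_mul]
      rw [MvPolynomial.eval_eq]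
      refine Finset.sum_congr rfl fun α hα => ?_
      congr 1
      refine Finset.prod_congr rfl fun i hi => ?_
      have hne : α i ≠ 0 := Finsupp.mem_support_iff.mp hi
      rcases hw01 i with h0 | h1
      · rw [h0, zero_pow hne]
      · rw [h1, one_pow]
    rw [hey]
    refine Submodule.sum_mem _ fun α hα => Submodule.smul_mem _ _ (Submodule.subset_span ?_)
    have hcard : α.support.card ≤ k := by
      have h1 : α.support.card ≤ α.sum fun _ e => e := by
        calc α.support.card = ∑ i ∈ α.support, 1 := by simp
          _ ≤ ∑ i ∈ α.support, α i :=
            Finset.sum_le_sum fun i hi => Nat.one_le_iff_ne_zero.mpr (Finsupp.mem_support_iff.mp hi)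
          _ = α.sum fun _ e => e := rfl
      exact h1.trans ((MvPolynomial.le_totalDegree hα).trans (hfd y y.2))
    refine Finset.mem_coe.mpr (Finset.mem_image.mpr ⟨α.support, ?_, rfl⟩)
    refine Finset.mem_biUnion.mpr ⟨α.support.card, Finset.mem_range.mpr (Nat.lt_succ_of_le hcard),
      Finset.mem_powersetCard.mpr ⟨Finset.subset_univ _, rfl⟩⟩
  -- the e y's are linearly independent
  have hindep : LinearIndependent F e := by
    rw [Fintype.linearIndependent_iff]
    intro g hg y
    have := congrFun hg y
    simp only [Finset.sum_apply, Pi.smul_apply, smul_eq_mul, Pi.zero_apply] at this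
    rw [Finset.sum_eq_single y (fun z _ hzy => by
        rw [show (e z) y = 0 from hf0 z z.2 y y.2 (fun hh => hzy (Subtype.ext hh.symm)), mul_zero])
      (fun hy => absurd (Finset.mem_univ y) hy)] at this
    rcases mul_eq_zero.mp this with h | h
    · exact h
    · exact absurd h (hfy y y.2)
  -- lift to the span, get cardinality bound
  have hindep' : LinearIndependent F (fun y : V => (⟨e y, he_mem y⟩ : p)) := by
    apply LinearIndependent.of_comp p.subtype
    convert hindep
    rfl
  haveI : FiniteDimensional F p := FiniteDimensional.span_finset F (T.image m)
  have hcard := hindep'.fintype_card_le_finrank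
  have hfr : Module.finrank F p ≤ (T.image m).card :=
    finrank_span_finset_le_card (T.image m)
  have : V.card ≤ ∑ i ∈ Finset.range (k + 1), n.choose i := by
    calc V.card = Fintype.card V := (Fintype.card_coe V).symm
      _ ≤ Module.finrank F p := hcard
      _ ≤ (T.image m).card := hfr
      _ ≤ T.card := Finset.card_image_le
      _ = _ := hTcard
  omega
end

section
/- Let F be a field, n ≥ 1, and let V ⊆ F^n be a non-empty finite set of points. Suppose there exists a subgroup G of the group of invertible affine transformations of F^n such that every element of G maps V onto V and G acts transitively on V. Then for EVERY point v ∈ V, every almost cover of V and v by affine hyperplanes H_1, …, H_m satisfies m > (n · |V|^{1/n})/e − n, where e is Euler's number and |V|^{1/n} is the real n-th root of the cardinality of V. -/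
open MvPolynomial in
-- Aux: factorial vs exp
lemma aux_fact_exp {n : ℕ} (hn : 1 ≤ n) : ((n:ℝ))^n < (n.factorial : ℝ) * Real.exp 1 ^ n := by
  have hx : (0:ℝ) ≤ n := Nat.cast_nonneg n
  have hsum := Real.sum_le_exp_of_nonneg hx (n+1)
  have hsub : ({0, n} : Finset ℕ) ⊆ Finset.range (n+1) := by
    intro i hi; simp at hi; rcases hi with h | h <;> simp [h] <;> omega
  have hpair : (1:ℝ) + (n:ℝ)^n / n.factorial ≤ ∑ i ∈ Finset.range (n+1), (n:ℝ)^i / i.factorial := by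
    have h0n : (0:ℕ) ≠ n := by omega
    have := Finset.sum_le_sum_of_subset_of_nonneg hsub
      (fun i _ _ => by positivity : ∀ i ∈ Finset.range (n+1), i ∉ ({0,n}:Finset ℕ) → (0:ℝ) ≤ (n:ℝ)^i / i.factorial)
    calc (1:ℝ) + (n:ℝ)^n / n.factorial
        = ∑ i ∈ ({0, n} : Finset ℕ), (n:ℝ)^i / i.factorial := by
          rw [Finset.sum_pair h0n]; simp
      _ ≤ _ := this
  have hlt : (n:ℝ)^n / n.factorial < Real.exp n := by nlinarith [hpair, hsum]
  have hfac : (0:ℝ) < (n.factorial : ℝ) := by exact_mod_cast n.factorial_pos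
  rw [div_lt_iff₀ hfac] at hlt
  rw [Real.exp_one_pow]
  nlinarith [hlt]

open MvPolynomial

lemma aux_eval_mem_span {F : Type*} [Field F] {n m : ℕ} (V : Finset (Fin n → F))
    (P : MvPolynomial (Fin n) F) (hP : P.totalDegree ≤ m) :
    (fun u : ↥V => MvPolynomial.eval (u : Fin n → F) P) ∈
      Submodule.span F (Set.range (fun (s : Sym (Fin (n+1)) m) (u : ↥V) =>
        ∏ i : Fin n, (u : Fin n → F) i ^ Multiset.count (Fin.castSucc i) (s : Multiset (Fin (n+1))))) := by
  classical
  have hPe : ∀ x : Fin n → F, MvPolynomial.eval x P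
      = ∑ d ∈ P.support, MvPolynomial.coeff d P * ∏ i, x i ^ d i := by
    intro x
    conv_lhs => rw [P.as_sum]
    rw [map_sum]
    refine Finset.sum_congr rfl fun d _ => ?_
    rw [MvPolynomial.eval_monomial]
    congr 1
    exact Finsupp.prod_fintype _ _ (fun i => pow_zero _)
  have heq : (fun u : ↥V => MvPolynomial.eval (u : Fin n → F) P)
      = ∑ d ∈ P.support, MvPolynomial.coeff d P • (fun u : ↥V => ∏ i, (u : Fin n → F) i ^ d i) := by
    funext u
    simp [hPe, Finset.sum_apply]
  rw [heq]
  refine Submodule.sum_mem _ fun d hd => Submodule.smul_mem _ _ (Submodule.subset_span ?_)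
  have hds : (d.sum fun _ e => e) ≤ m := le_trans (MvPolynomial.le_totalDegree hd) hP
  refine ⟨⟨Multiset.map Fin.castSucc d.toMultiset
    + Multiset.replicate (m - d.sum fun _ e => e) (Fin.last n), ?_⟩, ?_⟩
  · rw [Multiset.card_add, Multiset.card_map, Multiset.card_replicate, Finsupp.card_toMultiset]
    exact Nat.add_sub_cancel' hds
  · funext u
    refine Finset.prod_congr rfl fun i _ => ?_
    congr 1
    rw [Sym.coe_mk, Multiset.count_add, Multiset.count_map_eq_count' _ _ (Fin.castSucc_injective n),
      Multiset.count_replicate, if_neg (Fin.castSucc_lt_last i).ne', Finsupp.count_toMultiset, add_zero]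


/-- If a subgroup of the group of invertible affine transformations of `F^n`
preserves the nonempty finite set `V` and acts transitively on it, then for
every point `v ∈ V`, every almost cover of `V` and `v` consists of more than
`n·|V|^{1/n}/e − n` affine hyperplanes. -/
theorem almost_cover_lower_bound_root_transitive {F : Type*} [Field F] {n : ℕ}
    (hn : 1 ≤ n) (V : Finset (Fin n → F)) (hV : V.Nonempty)
    (G : Subgroup ((Fin n → F) ≃ᵃ[F] (Fin n → F)))
    (hGV : ∀ g ∈ G, (⇑g) '' (↑V : Set (Fin n → F)) = ↑V)
    (hGtrans : ∀ v ∈ V, ∀ w ∈ V, ∃ g ∈ G, g v = w) :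
    ∀ v ∈ V, ∀ (m : ℕ) (H : Fin m → Set (Fin n → F)),
      (∀ j, IsAffineHyperplane (H j)) →
      (↑V \ {v} : Set (Fin n → F)) ⊆ ⋃ j, H j →
      v ∉ ⋃ j, H j →
      (n : ℝ) * (V.card : ℝ) ^ (1 / (n : ℝ)) / Real.exp 1 - n < m := by
  classical
  intro v hv m H hH hcov hvmem
  choose a c _ hHeq using hH
  have hex : ∀ w : ↥V, ∃ g : (Fin n → F) ≃ᵃ[F] (Fin n → F), g ∈ G ∧ g ↑w = v := by
    intro w
    obtain ⟨g, hg, hgw⟩ := hGtrans ↑w w.2 v hv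
    exact ⟨g, hg, hgw⟩
  choose g hgG hgv using hex
  -- the functions
  set f : ↥V → (↥V → F) :=
    fun w u => ∏ j, (∑ i, a j i * (g w ↑u) i - c j) with hf
  -- f w w ≠ 0
  have hfww : ∀ w : ↥V, f w w ≠ 0 := by
    intro w
    rw [hf]
    refine Finset.prod_ne_zero_iff.2 fun j _ => sub_ne_zero.2 fun hEq => ?_
    apply hvmem
    refine Set.mem_iUnion.2 ⟨j, ?_⟩
    rw [hHeq j]
    rw [hgv w] at hEq
    exact hEq
  -- f w u = 0 for u ≠ w
  have hfwu : ∀ w u : ↥V, u ≠ w → f w u = 0 := by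
    intro w u hne
    have hmem : g w ↑u ∈ (↑V : Set (Fin n → F)) := by
      rw [← hGV (g w) (hgG w)]
      exact ⟨↑u, u.2, rfl⟩
    have hne' : g w ↑u ≠ v := by
      intro hEq
      rw [← hgv w] at hEq
      exact hne (Subtype.ext ((g w).injective hEq))
    have : g w ↑u ∈ ⋃ j, H j := hcov ⟨hmem, hne'⟩
    obtain ⟨j, hj⟩ := Set.mem_iUnion.1 this
    rw [hHeq j] at hj
    rw [hf]
    exact Finset.prod_eq_zero (Finset.mem_univ j) (sub_eq_zero.2 hj)
  -- each f w is the evaluation of a polynomial of total degree ≤ m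
  set M : Sym (Fin (n+1)) m → (↥V → F) := fun s u =>
    ∏ i : Fin n, (u : Fin n → F) i ^ Multiset.count (Fin.castSucc i) (s : Multiset (Fin (n+1))) with hM
  set S : Submodule F (↥V → F) := Submodule.span F (Set.range M) with hS
  have hfS : ∀ w : ↥V, f w ∈ S := by
    intro w
    set gl := (g w).linear with hgl
    have hgdecomp : ∀ x : Fin n → F, g w x = gl x + g w 0 := by
      intro x
      have := (g w).map_vadd 0 x
      simpa using this
    set A : Fin m → Fin n → F := fun j k => ∑ i, a j i * gl (Pi.single k 1) i with hA
    set b : Fin m → F := fun j => (∑ i, a j i * (g w 0) i) - c j with hb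
    have hlin : ∀ (j : Fin m) (x : Fin n → F),
        ∑ i, a j i * gl x i = ∑ k, A j k * x k := by
      intro j x
      have hx : gl x = ∑ k, x k • gl (Pi.single k (1:F)) := by
        conv_lhs => rw [← Finset.univ_sum_single x]
        rw [map_sum]
        refine Finset.sum_congr rfl fun k _ => ?_
        rw [← map_smul]
        congr 1
        funext i
        simp [Pi.single_apply]
      rw [hx]
      simp only [Finset.sum_apply, Pi.smul_apply, smul_eq_mul, Finset.mul_sum]
      rw [Finset.sum_comm]
      refine Finset.sum_congr rfl fun k _ => ?_
      rw [hA, Finset.sum_mul]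
      refine Finset.sum_congr rfl fun i _ => ?_
      ring
    have haff : ∀ (j : Fin m) (x : Fin n → F),
        ∑ i, a j i * (g w x) i - c j = (∑ k, A j k * x k) + b j := by
      intro j x
      rw [hb, ← hlin j x]
      simp only [hgdecomp x, Pi.add_apply, mul_add, Finset.sum_add_distrib]
      ring
    set P : MvPolynomial (Fin n) F :=
      ∏ j, ((∑ k, MvPolynomial.C (A j k) * MvPolynomial.X k) + MvPolynomial.C (b j)) with hP
    have hPdeg : P.totalDegree ≤ m := by
      rw [hP]
      calc P.totalDegree ≤ ∑ j : Fin m, ((∑ k, MvPolynomial.C (A j k) * MvPolynomial.X k)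
            + MvPolynomial.C (b j)).totalDegree := MvPolynomial.totalDegree_finset_prod _ _
        _ ≤ ∑ _j : Fin m, 1 := by
            refine Finset.sum_le_sum fun j _ => ?_
            refine le_trans (MvPolynomial.totalDegree_add _ _) (max_le ?_ ?_)
            · refine le_trans (MvPolynomial.totalDegree_finset_sum _ _) (Finset.sup_le fun k _ => ?_)
              refine le_trans (MvPolynomial.totalDegree_mul _ _) ?_
              simp [MvPolynomial.totalDegree_C, MvPolynomial.totalDegree_X]
            · simp [MvPolynomial.totalDegree_C]
        _ = m := by simp
    have hfeq : f w = fun u : ↥V => MvPolynomial.eval (u : Fin n → F) P := by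
      funext u
      rw [hf, hP]
      simp only [map_prod, map_add, map_sum, map_mul, MvPolynomial.eval_C, MvPolynomial.eval_X]
      exact Finset.prod_congr rfl fun j _ => haff j ↑u
    rw [hfeq, hS, hM]
    exact aux_eval_mem_span V P hPdeg
  -- linear independence and cardinality bound
  have instS : FiniteDimensional F ↥S := FiniteDimensional.span_of_finite F (Set.finite_range M)
  set f' : ↥V → ↥S := fun w => ⟨f w, hfS w⟩ with hf'
  have hli : LinearIndependent F f' := by
    rw [Fintype.linearIndependent_iff]
    intro coef hsum u
    have h0 : ∑ w : ↥V, coef w * f w u = 0 := by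
      have := congrArg (fun z : ↥S => (z : ↥V → F) u) hsum
      simpa [Finset.sum_apply] using this
    rw [Finset.sum_eq_single u (fun w _ hwu => by
      rw [hfwu w u (Ne.symm hwu), mul_zero]) (by simp)] at h0
    exact (mul_eq_zero.1 h0).resolve_right (hfww u)
  have hcard : V.card ≤ (m + n).choose n := by
    have h1 : Fintype.card ↥V ≤ Module.finrank F ↥S := hli.fintype_card_le_finrank
    have h2 : Module.finrank F ↥S ≤ Fintype.card (Sym (Fin (n+1)) m) := by
      refine le_trans (finrank_span_le_card (Set.range M)) ?_
      rw [Set.toFinset_range]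
      exact le_trans (Finset.card_image_le) (by simp)
    have h3 : Fintype.card (Sym (Fin (n+1)) m) = (m + n).choose n := by
      rw [Sym.card_sym_eq_choose]
      simp only [Fintype.card_fin]
      have : n + 1 + m - 1 = m + n := by omega
      rw [this, Nat.choose_symm_add, Nat.add_comm]
    calc V.card = Fintype.card ↥V := (Fintype.card_coe V).symm
      _ ≤ Module.finrank F ↥S := h1
      _ ≤ Fintype.card (Sym (Fin (n+1)) m) := h2
      _ = (m + n).choose n := h3
  -- the analytic part
  have hVpos : 0 < V.card := Finset.card_pos.mpr hV
  have hnR : (0:ℝ) < n := by exact_mod_cast hn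
  have he : (0:ℝ) < Real.exp 1 := Real.exp_pos 1
  have hNat : V.card * n.factorial ≤ (m + n)^n := by
    calc V.card * n.factorial ≤ (m+n).choose n * n.factorial := Nat.mul_le_mul_right _ hcard
      _ = (m+n).descFactorial n := by rw [Nat.descFactorial_eq_factorial_mul_choose]; ring
      _ ≤ (m+n)^n := Nat.descFactorial_le_pow _ _
  have hNatR : (V.card : ℝ) * (n.factorial : ℝ) ≤ ((m:ℝ) + n)^n := by
    have := hNat
    push_cast at *
    exact_mod_cast this
  have hfe : ((n:ℝ))^n < (n.factorial : ℝ) * Real.exp 1 ^ n := aux_fact_exp hn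
  have hBpos : (0:ℝ) < ((m:ℝ) + n) * Real.exp 1 / n := by positivity
  have hVlt : (V.card : ℝ) < (((m:ℝ) + n) * Real.exp 1 / n)^n := by
    rw [div_pow, mul_pow, lt_div_iff₀ (by positivity)]
    have h1 : (V.card : ℝ) * (n:ℝ)^n < (V.card : ℝ) * ((n.factorial : ℝ) * Real.exp 1 ^ n) := by
      have : (0:ℝ) < V.card := by exact_mod_cast hVpos
      exact mul_lt_mul_of_pos_left hfe this
    have h2 : (V.card : ℝ) * ((n.factorial : ℝ) * Real.exp 1 ^ n)
        ≤ ((m:ℝ) + n)^n * Real.exp 1 ^ n := by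
      rw [← mul_assoc]
      exact mul_le_mul_of_nonneg_right hNatR (by positivity)
    linarith
  have hroot : (V.card : ℝ) ^ (1 / (n : ℝ)) < ((m:ℝ) + n) * Real.exp 1 / n := by
    have hc0 : (0:ℝ) ≤ (V.card : ℝ) := by positivity
    have h1 : (V.card : ℝ) ^ (1 / (n : ℝ))
        < ((((m:ℝ) + n) * Real.exp 1 / n)^n) ^ (1 / (n : ℝ)) :=
      Real.rpow_lt_rpow hc0 hVlt (by positivity)
    calc (V.card : ℝ) ^ (1 / (n : ℝ)) < _ := h1
      _ = ((m:ℝ) + n) * Real.exp 1 / n := by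
          rw [← Real.rpow_natCast (((m:ℝ) + n) * Real.exp 1 / n) n, ← Real.rpow_mul hBpos.le]
          rw [mul_one_div, div_self (ne_of_gt hnR), Real.rpow_one]
  have h4 : (n:ℝ) * ((V.card:ℝ) ^ (1/(n:ℝ))) / Real.exp 1 < (m:ℝ) + n := by
    rw [div_lt_iff₀ he]
    calc (n:ℝ) * ((V.card:ℝ) ^ (1/(n:ℝ)))
        < (n:ℝ) * (((m:ℝ)+n) * Real.exp 1 / n) := mul_lt_mul_of_pos_left hroot hnR
      _ = (((m:ℝ)+n)) * Real.exp 1 := by field_simp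
  linarith
end
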